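/- arXiv:1012.5187 — 9 statements merged into one kernel-verified Lean document; each statement's English description precedes it below -/
import Mathlib

section
/- Let P be a finite set of points in the plane, not all collinear, and let G be its point visibility graph (two points adjacent iff the open segment between them contains no other point of P). Then the diameter of G is at most 2; that is, any two points of P are either mutually visible or there exists a third point of P visible from both. -/
/-!
Pick a point `r ∈ P` off the line `pq` whose distance to that line is minimal; it exists because
`P` is not collinear. A point strictly between `r` and a point of the line is strictly closer to the
line and still off it, so no point of `P` can block the view from `r` to `p` or to `q`.
The distance to the line is measured by an affine functional vanishing on it.
-/

/-- The point visibility graph of a finite planar point set `P`: two points are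
adjacent iff they are distinct and the open segment between them contains no
point of `P`. -/
def visGraph (P : Finset (ℝ × ℝ)) : SimpleGraph (ℝ × ℝ) where
  Adj p q := p ≠ q ∧ ∀ r ∈ P, r ∉ openSegment ℝ p q
  symm := by
    constructor
    rintro p q ⟨h1, h2⟩
    refine ⟨h1.symm, fun r hr => ?_⟩
    rw [openSegment_symm]
    exact h2 r hr
  loopless := by constructor; rintro p ⟨h1, _⟩; exact h1 rfl

theorem exists_affineMap_vanishing_at_pair_of_not_collinear {k V Pt : Type*} [Field k]
    [AddCommGroup V] [Module k V] [AddTorsor V Pt] {s : Set Pt} (h : ¬Collinear k s)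
    {p : Pt} (hp : p ∈ s) (q : Pt) :
    ∃ f : Pt →ᵃ[k] k, f p = 0 ∧ f q = 0 ∧ ∃ y ∈ s, f y ≠ 0 := by
  rw [collinear_iff_of_mem hp] at h
  push Not at h
  obtain ⟨y, hy, hy_off⟩ := h (q -ᵥ p)
  have hy_notMem : y -ᵥ p ∉ k ∙ (q -ᵥ p) := by
    rw [Submodule.mem_span_singleton]
    rintro ⟨a, ha⟩
    exact hy_off a (eq_vadd_iff_vsub_eq _ _ _ |>.mpr ha.symm)
  obtain ⟨φ, hφy, hφ⟩ := Submodule.exists_le_ker_of_notMem hy_notMem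
  refine ⟨φ.toAffineMap.comp (AffineEquiv.vaddConst k p).symm.toAffineMap, by simp, ?_,
    y, hy, by simpa using hφy⟩
  simpa using hφ (Submodule.mem_span_singleton_self (q -ᵥ p))

namespace AffineMap

variable {𝕜 E : Type*} [Field 𝕜] [LinearOrder 𝕜] [IsStrictOrderedRing 𝕜]
  [AddCommGroup E] [Module 𝕜 E]

theorem abs_apply_lt_of_mem_openSegment (f : E →ᵃ[𝕜] 𝕜) {x r s : E} (hx : f x = 0)
    (hr : f r ≠ 0) (hs : s ∈ openSegment 𝕜 x r) : 0 < |f s| ∧ |f s| < |f r| := by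
  have hfs : f s ∈ openSegment 𝕜 0 (f r) := hx ▸ image_openSegment 𝕜 f x r ▸ ⟨s, hs, rfl⟩
  obtain ⟨a, b, ha, hb, hab, hfs⟩ := hfs
  have hb1 : b < 1 := by linarith
  have hr' : 0 < |f r| := abs_pos.mpr hr
  rw [← hfs, smul_zero, zero_add, smul_eq_mul, abs_mul, abs_of_pos hb]
  exact ⟨mul_pos hb hr', mul_lt_of_lt_one_left hr' hb1⟩

theorem exists_mem_apply_ne_zero_forall_notMem_openSegment (f : E →ᵃ[𝕜] 𝕜) {P : Finset E}
    (hP : ∃ y ∈ P, f y ≠ 0) :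
    ∃ r ∈ P, f r ≠ 0 ∧ ∀ x, f x = 0 → ∀ s ∈ P, s ∉ openSegment 𝕜 x r := by
  classical
  obtain ⟨r, hr, hmin⟩ := (P.filter (f · ≠ 0)).exists_min_image (|f ·|) <| by
    simpa [Finset.filter_nonempty_iff] using hP
  rw [Finset.mem_filter] at hr
  refine ⟨r, hr.1, hr.2, fun x hx s hs hseg => ?_⟩
  obtain ⟨hs_pos, hs_lt⟩ := f.abs_apply_lt_of_mem_openSegment hx hr.2 hseg
  exact (hmin s (Finset.mem_filter.mpr ⟨hs, abs_pos.mp hs_pos⟩)).not_gt hs_lt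

end AffineMap

/-- If a finite planar point set `P` is not contained in a line, then its point
visibility graph has diameter at most `2`: any two points of `P` are mutually
visible, or some third point of `P` is visible from both. -/
theorem diameter_le_two_of_not_collinear (P : Finset (ℝ × ℝ))
    (h : ¬ Collinear ℝ (↑P : Set (ℝ × ℝ))) :
    ∀ p ∈ P, ∀ q ∈ P, p ≠ q →
      (visGraph P).Adj p q ∨ ∃ r ∈ P, (visGraph P).Adj p r ∧ (visGraph P).Adj r q := by
  intro p hp q _ _
  obtain ⟨f, hfp, hfq, hP⟩ := exists_affineMap_vanishing_at_pair_of_not_collinear h hp q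
  obtain ⟨r, hr, hfr, hsees⟩ := f.exists_mem_apply_ne_zero_forall_notMem_openSegment hP
  refine .inr ⟨r, hr, ⟨fun hpr => hfr (hpr ▸ hfp), hsees p hfp⟩,
    ⟨fun hrq => hfr (hrq ▸ hfq), ?_⟩⟩
  simpa only [openSegment_symm ℝ r q] using hsees q hfq
end

section
/- For any finite set P of n ≥ 3 points in the plane in general position (no three collinear), every blocking set for P has size at least 2n − 3. -/
/-- `Q` is a blocking set for the finite planar point set `P`: `Q` is disjoint
from `P` and every open segment joining two distinct points of `P` contains a
point of `Q`. -/
def IsBlockingSet (P Q : Finset (ℝ × ℝ)) : Prop :=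
  Disjoint P Q ∧ ∀ p ∈ P, ∀ q ∈ P, p ≠ q → ∃ r ∈ Q, r ∈ openSegment ℝ p q

/-- A finite planar point set is in general position if no three of its points
are collinear. -/
def GenPos (P : Finset (ℝ × ℝ)) : Prop :=
  ∀ p ∈ P, ∀ q ∈ P, ∀ r ∈ P, p ≠ q → p ≠ r → q ≠ r →
    ¬ Collinear ℝ ({p, q, r} : Set (ℝ × ℝ))

/-!
Choose `c` so that the linear functional `shearX c` is injective on `P`, and let `o` be its
minimiser on `P`. Every other point `p` lies in the half-plane `shearX c > shearX c o`, where the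
slope of `p - o` in the coordinates `(shearX c, y)` is a well-defined "angle" seen from `o`; by
general position these slopes are distinct. A blocker of the segment `o p` has the slope of `p`,
and a blocker of a segment `p q` has a slope strictly between those of `p` and `q` (a mediant).
So the set of blocker slopes contains the `n - 1` point slopes and a value strictly between any
two of them, which forces at least `2 (n - 1) - 1` distinct blockers.
-/

open Finset

theorem two_mul_card_le_card_add_one_of_exists_between {α : Type*} [LinearOrder α]
    {S T : Finset α} (hST : S ⊆ T)
    (hbetween : ∀ a ∈ S, ∀ b ∈ S, a < b → ∃ t ∈ T, a < t ∧ t < b) :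
    2 * #S ≤ #T + 1 := by
  classical
  induction S using Finset.induction_on_max generalizing T with
  | empty => simp
  | insert a s hlt ih =>
    have ha : a ∈ T := hST (mem_insert_self a s)
    rcases s.eq_empty_or_nonempty with rfl | hs
    · simpa using card_pos.2 ⟨a, ha⟩
    set b := s.max' hs
    have hb : b < a := hlt b (s.max'_mem hs)
    obtain ⟨t, ht, hbt, hta⟩ := hbetween b (mem_insert_of_mem (s.max'_mem hs)) a
      (mem_insert_self a s) hb
    have hIH : 2 * #s ≤ #(T.filter (· ≤ b)) + 1 := by
      refine ih (fun x hx => mem_filter.2 ⟨hST (mem_insert_of_mem hx), s.le_max' x hx⟩) ?_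
      intro x hx y hy hxy
      obtain ⟨u, hu, hxu, huy⟩ :=
        hbetween x (mem_insert_of_mem hx) y (mem_insert_of_mem hy) hxy
      exact ⟨u, mem_filter.2 ⟨hu, huy.le.trans (s.le_max' y hy)⟩, hxu, huy⟩
    have hnew : 2 ≤ #(T.filter (¬ · ≤ b)) := by
      have hsub : ({t, a} : Finset α) ⊆ T.filter (¬ · ≤ b) := by
        simp only [insert_subset_iff, singleton_subset_iff, mem_filter, not_le]
        exact ⟨⟨ht, hbt⟩, ha, hb⟩
      simpa [card_pair hta.ne] using card_le_card hsub
    have hsplit := card_filter_add_card_filter_not (s := T) (· ≤ b)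
    rw [card_insert_of_notMem fun has => (hlt a has).false]
    omega

theorem add_div_add_mem_Ioo {K : Type*} [Field K] [LinearOrder K] [IsStrictOrderedRing K]
    {a b c d : K} (hb : 0 < b) (hd : 0 < d) (h : a / b < c / d) :
    (a + c) / (b + d) ∈ Set.Ioo (a / b) (c / d) := by
  rw [div_lt_div_iff₀ hb hd] at h
  constructor
  · rw [div_lt_div_iff₀ hb (add_pos hb hd)]; linarith
  · rw [div_lt_div_iff₀ (add_pos hb hd) hd]; linarith

def shearX (c : ℝ) (p : ℝ × ℝ) : ℝ := p.1 + c * p.2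

theorem exists_injOn_shearX (s : Finset (ℝ × ℝ)) : ∃ c, Set.InjOn (shearX c) s := by
  classical
  obtain ⟨c, hc⟩ := (s ×ˢ s).image (fun pq => -(pq.1.1 - pq.2.1) / (pq.1.2 - pq.2.2))
    |>.exists_notMem
  refine ⟨c, fun p hp q hq hpq => ?_⟩
  simp only [shearX] at hpq
  by_cases h2 : p.2 = q.2
  · exact Prod.ext (by rw [h2] at hpq; linarith) h2
  · refine absurd (mem_image.2 ⟨(p, q), mem_product.2 ⟨hp, hq⟩, ?_⟩) hc
    field_simp [sub_ne_zero.2 h2]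
    linarith

noncomputable def slopeFrom (c : ℝ) (o p : ℝ × ℝ) : ℝ :=
  (p.2 - o.2) / (shearX c p - shearX c o)

theorem slopeFrom_of_mem_openSegment {c : ℝ} {o p r : ℝ × ℝ}
    (hr : r ∈ openSegment ℝ o p) :
    slopeFrom c o r = slopeFrom c o p := by
  rw [openSegment_eq_image] at hr
  obtain ⟨θ, ⟨hθ, -⟩, rfl⟩ := hr
  simp only [slopeFrom, shearX, Prod.fst_add, Prod.snd_add, Prod.smul_fst, Prod.smul_snd,
    smul_eq_mul]
  rw [show (1 - θ) * o.2 + θ * p.2 - o.2 = θ * (p.2 - o.2) by ring,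
    show (1 - θ) * o.1 + θ * p.1 + c * ((1 - θ) * o.2 + θ * p.2) - (o.1 + c * o.2)
      = θ * (p.1 + c * p.2 - (o.1 + c * o.2)) by ring, mul_div_mul_left _ _ hθ.ne']

theorem slopeFrom_mem_Ioo_of_mem_openSegment {c : ℝ} {o p q r : ℝ × ℝ}
    (hp : shearX c o < shearX c p) (hq : shearX c o < shearX c q)
    (hpq : slopeFrom c o p < slopeFrom c o q) (hr : r ∈ openSegment ℝ p q) :
    slopeFrom c o r ∈ Set.Ioo (slopeFrom c o p) (slopeFrom c o q) := by
  rw [openSegment_eq_image] at hr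
  obtain ⟨θ, ⟨hθ₀, hθ₁⟩, rfl⟩ := hr
  have hθ₀' : 0 < 1 - θ := sub_pos.2 hθ₁
  have hslope : slopeFrom c o ((1 - θ) • p + θ • q) =
      ((1 - θ) * (p.2 - o.2) + θ * (q.2 - o.2)) /
        ((1 - θ) * (shearX c p - shearX c o) + θ * (shearX c q - shearX c o)) := by
    simp only [slopeFrom, shearX, Prod.fst_add, Prod.snd_add, Prod.smul_fst, Prod.smul_snd,
      smul_eq_mul]
    congr 1 <;> ring
  have key := add_div_add_mem_Ioo (a := (1 - θ) * (p.2 - o.2)) (c := θ * (q.2 - o.2))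
    (mul_pos hθ₀' (sub_pos.2 hp)) (mul_pos hθ₀ (sub_pos.2 hq))
    (by rwa [mul_div_mul_left _ _ hθ₀'.ne', mul_div_mul_left _ _ hθ₀.ne'])
  rwa [mul_div_mul_left _ _ hθ₀'.ne', mul_div_mul_left _ _ hθ₀.ne', ← hslope] at key

theorem collinear_of_slopeFrom_eq {c : ℝ} {o p q : ℝ × ℝ}
    (hp : shearX c p ≠ shearX c o) (hq : shearX c q ≠ shearX c o)
    (h : slopeFrom c o p = slopeFrom c o q) : Collinear ℝ ({o, p, q} : Set (ℝ × ℝ)) := by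
  have hdp : shearX c p - shearX c o ≠ 0 := sub_ne_zero.2 hp
  have hdq : shearX c q - shearX c o ≠ 0 := sub_ne_zero.2 hq
  rw [slopeFrom, slopeFrom, div_eq_div_iff hdp hdq] at h
  have hq_eq :
      AffineMap.lineMap o p ((shearX c q - shearX c o) / (shearX c p - shearX c o)) = q := by
    simp only [shearX] at h hdp
    ext <;> simp only [AffineMap.lineMap_apply_module, shearX, Prod.fst_add, Prod.snd_add,
      Prod.smul_fst, Prod.smul_snd, smul_eq_mul] <;> field_simp
    · linear_combination -c * h
    · linear_combination h
  rw [Set.pair_comm, Set.insert_comm]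
  exact collinear_insert_of_mem_affineSpan_pair
    (hq_eq ▸ AffineMap.lineMap_mem_affineSpan_pair _ _ _)

theorem GenPos.injOn_slopeFrom {P : Finset (ℝ × ℝ)} (hP : GenPos P) {c : ℝ} {o : ℝ × ℝ}
    (ho : o ∈ P) (hpos : ∀ p ∈ P.erase o, shearX c o < shearX c p) :
    Set.InjOn (slopeFrom c o) (P.erase o) := by
  intro p hp q hq h
  by_contra hpq
  exact hP o ho p (mem_of_mem_erase hp) q (mem_of_mem_erase hq) (ne_of_mem_erase hp).symm
    (ne_of_mem_erase hq).symm hpq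
    (collinear_of_slopeFrom_eq (hpos p hp).ne' (hpos q hq).ne' h)

theorem blocking_set_lower_bound_general (P : Finset (ℝ × ℝ)) (n : ℕ)
    (hcard : P.card = n) (hgen : GenPos P) :
    ∀ Q : Finset (ℝ × ℝ), IsBlockingSet P Q → 2 * n - 3 ≤ Q.card := by
  intro Q hQ
  rcases P.eq_empty_or_nonempty with rfl | hP
  · simp [← hcard]
  obtain ⟨c, hc⟩ := exists_injOn_shearX P
  obtain ⟨o, ho, hmin⟩ := P.exists_min_image (shearX c) hP
  have hpos : ∀ p ∈ P.erase o, shearX c o < shearX c p := fun p hp =>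
    (hmin p (mem_of_mem_erase hp)).lt_of_ne fun h =>
      ne_of_mem_erase hp (hc (mem_of_mem_erase hp) ho h.symm)
  set S := (P.erase o).image (slopeFrom c o)
  set T := Q.image (slopeFrom c o)
  have hS : #S = n - 1 := by
    rw [card_image_of_injOn (hgen.injOn_slopeFrom ho hpos), card_erase_of_mem ho, hcard]
  have hST : S ⊆ T := by
    refine image_subset_iff.2 fun p hp => ?_
    obtain ⟨r, hr, hor⟩ := hQ.2 o ho p (mem_of_mem_erase hp) (ne_of_mem_erase hp).symm
    exact mem_image.2 ⟨r, hr, slopeFrom_of_mem_openSegment hor⟩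
  have hbetween : ∀ a ∈ S, ∀ b ∈ S, a < b → ∃ t ∈ T, a < t ∧ t < b := by
    simp only [S, forall_mem_image]
    intro p hp q hq hlt
    obtain ⟨r, hr, hpqr⟩ := hQ.2 p (mem_of_mem_erase hp) q (mem_of_mem_erase hq)
      (by rintro rfl; exact hlt.false)
    exact ⟨_, mem_image_of_mem _ hr,
      slopeFrom_mem_Ioo_of_mem_openSegment (hpos p hp) (hpos q hq) hlt hpqr⟩
  have hcount := two_mul_card_le_card_add_one_of_exists_between hST hbetween
  have hT : #T ≤ #Q := card_image_le
  omega

/-- For any set of `n ≥ 3` points in general position in the plane, every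
blocking set has size at least `2n - 3`. -/
theorem blocking_set_lower_bound (P : Finset (ℝ × ℝ)) (n : ℕ) (hn : 3 ≤ n)
    (hcard : P.card = n) (hgen : GenPos P) :
    ∀ Q : Finset (ℝ × ℝ), IsBlockingSet P Q → 2 * n - 3 ≤ Q.card :=
  blocking_set_lower_bound_general P n hcard hgen
end

section
/- In every k-blocked point set, at most three points are collinear. -/
/-- A colouring `c` of a finite planar point set `P` with `k` colours is
`k`-blocked if two distinct points of `P` receive different colours exactly when
they are mutually visible, i.e. when the open segment between them contains no
other point of `P`. -/
def KBlocked (k : ℕ) (P : Finset (ℝ × ℝ)) (c : (ℝ × ℝ) → Fin k) : Prop :=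
  ∀ p ∈ P, ∀ q ∈ P, p ≠ q →
    ((∀ r ∈ P, r ∉ openSegment ℝ p q) ↔ c p ≠ c q)

/-!
Restricted to a line, a blocked colouring becomes a colouring of a finite chain in which two
points get different colours exactly when they are adjacent. If the chain has four points
`a < b < c < d`, then `b` blocks both `a c` and `a d`, so `a`, `c`, `d` share a colour; but `c`
and `d` are adjacent.
-/

open Set Function

theorem Collinear.exists_injective_affineMap {k V P : Type*} [Field k] [AddCommGroup V]
    [Module k V] [AddTorsor V P] {s : Set P} (h : Collinear k s) (hs : s.Nontrivial) :
    ∃ f : k →ᵃ[k] P, Injective f ∧ s ⊆ range f := by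
  obtain ⟨p₀, hp₀, p₁, hp₁, hne⟩ := hs
  obtain ⟨v, hv⟩ := (collinear_iff_of_mem hp₀).mp h
  have hv0 : v ≠ 0 := by
    rintro rfl
    obtain ⟨r, rfl⟩ := hv p₁ hp₁
    simp at hne
  refine ⟨AffineMap.lineMap p₀ (v +ᵥ p₀), AffineMap.lineMap_injective k ?_, fun p hp => ?_⟩
  · intro heq
    exact hv0 (by simpa using congrArg (· -ᵥ p₀) heq.symm)
  · obtain ⟨r, rfl⟩ := hv p hp
    exact ⟨r, by simp [AffineMap.lineMap_apply]⟩

def OrderBlocked {α β : Type*} [LinearOrder α] (U : Finset α) (col : α → β) : Prop :=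
  ∀ s ∈ U, ∀ t ∈ U, s < t → ((∀ u ∈ U, u ∉ Ioo s t) ↔ col s ≠ col t)

theorem OrderBlocked.card_le_three {α β : Type*} [LinearOrder α] {U : Finset α} {col : α → β}
    (h : OrderBlocked U col) : U.card ≤ 3 := by
  by_contra! hU
  set e := U.orderEmbOfFin rfl
  have mem (i : Fin U.card) : e i ∈ U := U.orderEmbOfFin_mem rfl i
  let ι : Fin 4 → Fin U.card := Fin.castLE hU
  have blocked (i m j : Fin 4) (him : i < m) (hmj : m < j) : col (e (ι i)) = col (e (ι j)) := by
    by_contra hne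
    refine (h _ (mem _) _ (mem _) ?_).mpr hne _ (mem (ι m)) ⟨?_, ?_⟩ <;>
      simp [ι, him, hmj, him.trans hmj]
  have adjacent : col (e (ι 2)) ≠ col (e (ι 3)) := by
    refine (h _ (mem _) _ (mem _) (by simp [ι])).mp ?_
    intro u hu ⟨h₂, h₃⟩
    obtain ⟨m, rfl⟩ : u ∈ range e := by rwa [Finset.range_orderEmbOfFin]
    rw [e.lt_iff_lt, Fin.lt_def] at h₂ h₃
    simp only [ι, Fin.val_castLE] at h₂ h₃
    omega
  exact adjacent <| (blocked 0 1 2 (by decide) (by decide)).symm.trans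
    (blocked 0 1 3 (by decide) (by decide))

theorem KBlocked.orderBlocked_preimage {k : ℕ} {P : Finset (ℝ × ℝ)} {c : ℝ × ℝ → Fin k}
    (h : KBlocked k P c) {f : ℝ →ᵃ[ℝ] ℝ × ℝ} (hf : Injective f) :
    OrderBlocked (P.preimage f hf.injOn) (c ∘ f) := by
  intro s hs t ht hst
  rw [Finset.mem_preimage] at hs ht
  rw [comp_apply, comp_apply, ← h _ hs _ ht (hf.ne hst.ne), ← image_openSegment,
    openSegment_eq_Ioo hst]
  simp only [Finset.mem_preimage, mem_image, not_exists, not_and]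
  exact ⟨fun H r hr u hu hur => H u (hur ▸ hr) hu, fun H u hu hu' => H _ hu u hu' rfl⟩

/-- In every `k`-blocked point set, at most three points are collinear: no four
points of the set lie on a common line. -/
theorem kBlocked_at_most_three_collinear (k : ℕ) (P : Finset (ℝ × ℝ))
    (c : (ℝ × ℝ) → Fin k) (h : KBlocked k P c) :
    ∀ S ⊆ P, S.card = 4 → ¬ Collinear ℝ (↑S : Set (ℝ × ℝ)) := by
  classical
  intro S hSP hS hcol
  obtain ⟨f, hf, hSf⟩ :=
    hcol.exists_injective_affineMap (Finset.one_lt_card_iff_nontrivial.mp (by omega))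
  have hS_le : S.card ≤ (P.preimage f hf.injOn).card := by
    rw [Finset.card_preimage]
    exact Finset.card_le_card fun x hx => Finset.mem_filter.mpr ⟨hSP hx, hSf hx⟩
  have := (h.orderBlocked_preimage hf).card_le_three
  omega
end

section
/- Every 2-blocked point set has at most 3 points. -/
/-!
Order the plane lexicographically. A point of the open segment between two points lies strictly
between them in this order, so lexicographically consecutive points of `P` see each other and the
colours alternate along the order. If `p₀ < p₁ < p₂ < p₃` are consecutive, then `p₀` and `p₂` get
the same colour, so they are blocked, and the only possible blocker is `p₁`; likewise `p₂` blocks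
`p₁` and `p₃`. Hence `p₁` lies strictly between `p₀` and `p₃`, which have different colours: a
contradiction.
-/

open Finset

theorem sbtw_iff_mem_openSegment_and_ne {R V : Type*} [Ring R] [PartialOrder R]
    [IsOrderedRing R] [IsDomain R] [AddCommGroup V] [Module R V] [Module.IsTorsionFree R V]
    {x y z : V} : Sbtw R x y z ↔ y ∈ openSegment R x z ∧ x ≠ z := by
  rw [sbtw_iff_mem_image_Ioo_and_ne, openSegment_eq_image_lineMap]

theorem toLex_lt_of_mem_openSegment {𝕜 E F : Type*} [Semiring 𝕜] [PartialOrder 𝕜]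
    [IsOrderedRing 𝕜] [AddCommMonoid E] [PartialOrder E] [IsOrderedCancelAddMonoid E] [Module 𝕜 E]
    [PosSMulStrictMono 𝕜 E] [AddCommMonoid F] [PartialOrder F] [IsOrderedCancelAddMonoid F]
    [Module 𝕜 F] [PosSMulStrictMono 𝕜 F] {p q r : E × F} (hr : r ∈ openSegment 𝕜 p q)
    (hpq : toLex p < toLex q) : toLex p < toLex r ∧ toLex r < toLex q := by
  obtain ⟨a, b, ha, hb, hab, rfl⟩ := hr
  simp only [Prod.Lex.toLex_lt_toLex, Prod.fst_add, Prod.snd_add, Prod.smul_fst,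
    Prod.smul_snd] at hpq ⊢
  rcases hpq with hlt | ⟨heq, hlt⟩
  · have h₁ := openSegment_subset_Ioo hlt ⟨a, b, ha, hb, hab, rfl⟩
    exact ⟨.inl h₁.1, .inl h₁.2⟩
  · have h₁ : a • p.1 + b • q.1 = q.1 := by rw [heq, Convex.combo_self hab]
    have h₂ := openSegment_subset_Ioo hlt ⟨a, b, ha, hb, hab, rfl⟩
    exact ⟨.inr ⟨heq.trans h₁.symm, h₂.1⟩, .inr ⟨h₁, h₂.2⟩⟩

theorem Finset.orderEmbOfFin_le_of_lt {α : Type*} [LinearOrder α] (s : Finset α) {k : ℕ}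
    (h : #s = k) {i j : Fin k} (hij : (j : ℕ) = i + 1) {x : α} (hx : x ∈ s)
    (hlt : s.orderEmbOfFin h i < x) : s.orderEmbOfFin h j ≤ x := by
  obtain ⟨m, rfl⟩ : x ∈ Set.range (s.orderEmbOfFin h) := by
    rwa [range_orderEmbOfFin]
  have : i < m := (s.orderEmbOfFin h).lt_iff_lt.mp hlt
  exact (s.orderEmbOfFin h).le_iff_le.mpr (Fin.le_def.mpr (by omega))

structure IsLexSucc (P : Finset (ℝ × ℝ)) (p q : ℝ × ℝ) : Prop where
  left_mem : p ∈ P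
  right_mem : q ∈ P
  lt : toLex p < toLex q
  le_of_lt : ∀ r ∈ P, toLex p < toLex r → toLex q ≤ toLex r

namespace IsLexSucc

variable {P : Finset (ℝ × ℝ)} {p q r : ℝ × ℝ}

theorem ne (h : IsLexSucc P p q) : p ≠ q := by
  rintro rfl
  exact lt_irrefl _ h.lt

theorem notMem_openSegment (h : IsLexSucc P p q) {s : ℝ × ℝ} (hs : s ∈ P) :
    s ∉ openSegment ℝ p q := fun hseg =>
  have hbtw := toLex_lt_of_mem_openSegment hseg h.lt
  (h.le_of_lt s hs hbtw.1).not_gt hbtw.2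

theorem eq_of_mem_openSegment (hpq : IsLexSucc P p q) (hqr : IsLexSucc P q r) {s : ℝ × ℝ}
    (hs : s ∈ P) (hseg : s ∈ openSegment ℝ p r) : s = q := by
  have hbtw := toLex_lt_of_mem_openSegment hseg (hpq.lt.trans hqr.lt)
  refine toLex.injective (le_antisymm ?_ (hpq.le_of_lt s hs hbtw.1))
  by_contra! hqs
  exact (hqr.le_of_lt s hs hqs).not_gt hbtw.2

end IsLexSucc

theorem exists_isLexSucc_chain {P : Finset (ℝ × ℝ)} (hP : 4 ≤ #P) :
    ∃ p₀ p₁ p₂ p₃, IsLexSucc P p₀ p₁ ∧ IsLexSucc P p₁ p₂ ∧ IsLexSucc P p₂ p₃ := by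
  set S := P.map toLex.toEmbedding
  let f := S.orderEmbOfFin rfl
  have hS : 4 ≤ #S := by rwa [card_map]
  have hsucc : ∀ i j : Fin #S, (j : ℕ) = i + 1 → IsLexSucc P (ofLex (f i)) (ofLex (f j)) :=
    fun i j hij =>
      { left_mem := by simpa [S] using S.orderEmbOfFin_mem rfl i
        right_mem := by simpa [S] using S.orderEmbOfFin_mem rfl j
        lt := f.strictMono (Fin.lt_def.mpr (by omega))
        le_of_lt := fun r hr hlt =>
          S.orderEmbOfFin_le_of_lt rfl hij (mem_map_of_mem toLex.toEmbedding hr) hlt }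
  exact ⟨_, _, _, _, hsucc ⟨0, by omega⟩ ⟨1, by omega⟩ rfl,
    hsucc ⟨1, by omega⟩ ⟨2, by omega⟩ rfl, hsucc ⟨2, by omega⟩ ⟨3, by omega⟩ rfl⟩

theorem fin_two_eq_of_ne_of_ne : ∀ {a b d : Fin 2}, a ≠ b → b ≠ d → a = d := by decide

namespace KBlocked

variable {k : ℕ} {P : Finset (ℝ × ℝ)} {p q r : ℝ × ℝ}

theorem apply_ne_of_isLexSucc {c : ℝ × ℝ → Fin k} (h : KBlocked k P c) (hpq : IsLexSucc P p q) :
    c p ≠ c q :=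
  (h p hpq.left_mem q hpq.right_mem hpq.ne).mp fun _ ↦ hpq.notMem_openSegment

theorem apply_eq_of_isLexSucc {c : ℝ × ℝ → Fin 2} (h : KBlocked 2 P c) (hpq : IsLexSucc P p q)
    (hqr : IsLexSucc P q r) : c p = c r :=
  fin_two_eq_of_ne_of_ne (h.apply_ne_of_isLexSucc hpq) (h.apply_ne_of_isLexSucc hqr)

theorem sbtw_of_isLexSucc {c : ℝ × ℝ → Fin 2} (h : KBlocked 2 P c) (hpq : IsLexSucc P p q)
    (hqr : IsLexSucc P q r) : Sbtw ℝ p q r := by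
  have hpr : p ≠ r := (hpq.lt.trans hqr.lt).ne
  obtain ⟨s, hs, hseg⟩ : ∃ s ∈ P, s ∈ openSegment ℝ p r := by
    by_contra! hvis
    exact (h p hpq.left_mem r hqr.right_mem hpr).mp hvis (h.apply_eq_of_isLexSucc hpq hqr)
  rw [hpq.eq_of_mem_openSegment hqr hs hseg] at hseg
  exact sbtw_iff_mem_openSegment_and_ne.mpr ⟨hseg, hpr⟩

end KBlocked

/-- Every `2`-blocked point set has at most `3` points. -/
theorem two_blocked_card_le_three (P : Finset (ℝ × ℝ)) (c : (ℝ × ℝ) → Fin 2)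
    (h : KBlocked 2 P c) : P.card ≤ 3 := by
  by_contra! hP
  obtain ⟨p₀, p₁, p₂, p₃, h₀₁, h₁₂, h₂₃⟩ := exists_isLexSucc_chain hP
  obtain ⟨hseg, hne⟩ := sbtw_iff_mem_openSegment_and_ne.mp
    ((h.sbtw_of_isLexSucc h₀₁ h₁₂).trans_expand_left (h.sbtw_of_isLexSucc h₁₂ h₂₃))
  have hc : c p₀ ≠ c p₃ := h.apply_eq_of_isLexSucc h₀₁ h₁₂ ▸ h.apply_ne_of_isLexSucc h₂₃
  exact (h p₀ h₀₁.left_mem p₃ h₂₃.right_mem hne).mpr hc p₁ h₁₂.left_mem hseg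
end

section
/- For every positive integer k ≥ 3 there exists a smallest integer g(k) such that any set of at least g(k) points in the plane in general position contains k points that are the vertices of a convex polygon (Erdős–Szekeres theorem). -/
/-- A finite planar point set is in (strictly) convex position if no point of it
lies in the convex hull of the remaining points; such points are the vertices of
a convex polygon. -/
def ConvexPos (S : Finset (ℝ × ℝ)) : Prop :=
  ∀ p ∈ S, p ∉ convexHull ℝ (↑(S.erase p) : Set (ℝ × ℝ))

open Finset

lemma Finset.exists_max_lt {α : Type*} [LinearOrder α] {s : Finset α} {e : α}
    (h : ∃ a ∈ s, a < e) : ∃ p ∈ s, p < e ∧ ∀ a ∈ s, a < e → a ≤ p := by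
  obtain ⟨p, hp, hmax⟩ := (s.filter (· < e)).exists_max_image id (by simpa [Finset.Nonempty])
  simp only [mem_filter, id] at hp hmax
  exact ⟨p, hp.1, hp.2, fun a ha hae => hmax a ⟨ha, hae⟩⟩

lemma Finset.exists_min_gt {α : Type*} [LinearOrder α] {s : Finset α} {e : α}
    (h : ∃ a ∈ s, e < a) : ∃ d ∈ s, e < d ∧ ∀ a ∈ s, e < a → d ≤ a := by
  obtain ⟨d, hd, hmin⟩ := (s.filter (e < ·)).exists_min_image id (by simpa [Finset.Nonempty])
  simp only [mem_filter, id] at hd hmin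
  exact ⟨d, hd.1, hd.2, fun a ha hea => hmin a ⟨ha, hea⟩⟩

section Slope

variable {𝕜 : Type*} [Field 𝕜]

lemma sub_mul_slope_add_sub_mul_slope (f : 𝕜 → 𝕜) (a b c : 𝕜) :
    (b - a) * slope f a b + (c - b) * slope f b c = (c - a) * slope f a c := by
  simp only [← smul_eq_mul, sub_smul_slope, vsub_eq_sub]
  ring

lemma slope_sub_mul_self (f : 𝕜 → 𝕜) (m : 𝕜) {a b : 𝕜} (hab : a ≠ b) :
    slope (fun t => f t - m * t) a b = slope f a b - m := by
  rw [slope_def_field, slope_def_field]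
  field_simp [sub_ne_zero.mpr hab.symm]
  ring

lemma collinear_of_slope_eq {E : Type*} [AddCommGroup E] [Module 𝕜 E] (T : 𝕜 × 𝕜 →ₗ[𝕜] E)
    {f : 𝕜 → 𝕜} {p q r : 𝕜} (h : slope f p q = slope f q r) :
    Collinear 𝕜 ({T (p, f p), T (q, f q), T (r, f r)} : Set E) := by
  set m := slope f p q
  have hline : ∀ t, f t = f p + m * (t - p) → T (t, f t) = (t - p) • T (1, m) +ᵥ T (p, f p) := by
    intro t ht
    rw [← map_smul, vadd_eq_add, ← map_add]
    congr 1
    ext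
    · simp
    · simp only [Prod.snd_add, Prod.smul_snd, smul_eq_mul, ht]
      ring
  have hq : f q = f p + m * (q - p) := by
    have := sub_smul_slope f p q
    simp only [smul_eq_mul, vsub_eq_sub] at this
    linear_combination -this
  have hr : f r = f p + m * (r - p) := by
    have := sub_smul_slope f q r
    simp only [smul_eq_mul, vsub_eq_sub, ← h] at this
    linear_combination hq - this
  rw [collinear_iff_of_mem (Set.mem_insert _ _)]
  refine ⟨T (1, m), ?_⟩
  simp only [Set.mem_insert_iff, Set.mem_singleton_iff, forall_eq_or_imp, forall_eq]
  exact ⟨⟨0, by simp⟩, ⟨_, hline q hq⟩, ⟨_, hline r hr⟩⟩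

variable [LinearOrder 𝕜] [IsStrictOrderedRing 𝕜] {f : 𝕜 → 𝕜} {a b c : 𝕜}

lemma slope_lt_slope_iff_left (hab : a < b) (hbc : b < c) :
    slope f a b < slope f b c ↔ slope f a b < slope f a c := by
  have h := sub_mul_slope_add_sub_mul_slope f a b c
  constructor <;> intro <;> nlinarith

lemma slope_lt_slope_iff_right (hab : a < b) (hbc : b < c) :
    slope f a b < slope f b c ↔ slope f a c < slope f b c := by
  have h := sub_mul_slope_add_sub_mul_slope f a b c
  constructor <;> intro <;> nlinarith

end Slope

section Cups

variable {𝕜 : Type*} [Field 𝕜] [LinearOrder 𝕜] {f : 𝕜 → 𝕜} {a b c d e p : 𝕜}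
  {C D X : Finset 𝕜}

def GraphGenPos (f : 𝕜 → 𝕜) (X : Finset 𝕜) : Prop :=
  ∀ a ∈ X, ∀ b ∈ X, ∀ c ∈ X, a < b → b < c → slope f a b ≠ slope f b c

lemma GraphGenPos.subset (hX : GraphGenPos f X) (hCX : C ⊆ X) : GraphGenPos f C :=
  fun a ha b hb c hc => hX a (hCX ha) b (hCX hb) c (hCX hc)

/-- Caps of `f` are the cups of `-f`. -/
def IsCup (f : 𝕜 → 𝕜) (C : Finset 𝕜) : Prop :=
  ∀ a ∈ C, ∀ b ∈ C, ∀ c ∈ C, a < b → b < c → slope f a b < slope f b c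

lemma IsCup.subset (hD : IsCup f D) (hCD : C ⊆ D) : IsCup f C :=
  fun a ha b hb c hc => hD a (hCD ha) b (hCD hb) c (hCD hc)

lemma isCup_of_card_le_two (hC : #C ≤ 2) : IsCup f C := by
  intro a ha b hb c hc hab hbc
  have : #{a, b, c} ≤ #C := card_le_card (by simp [insert_subset_iff, *])
  rw [card_insert_of_notMem (by simp [hab.ne, (hab.trans hbc).ne]), card_pair hbc.ne] at this
  omega

variable [IsStrictOrderedRing 𝕜]

lemma IsCup.slope_le_slope_left (hC : IsCup f C) (ha : a ∈ C) (hp : p ∈ C) (he : e ∈ C)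
    (hap : a ≤ p) (hpe : p < e) : slope f a e ≤ slope f p e := by
  rcases hap.eq_or_lt with rfl | hap
  · rfl
  · exact ((slope_lt_slope_iff_right hap hpe).mp (hC a ha p hp e he hap hpe)).le

lemma IsCup.slope_le_slope_right (hC : IsCup f C) (he : e ∈ C) (hd : d ∈ C) (hc : c ∈ C)
    (hed : e < d) (hdc : d ≤ c) : slope f e d ≤ slope f e c := by
  rcases hdc.eq_or_lt with rfl | hdc
  · rfl
  · exact ((slope_lt_slope_iff_left hed hdc).mp (hC e he d hd c hc hed hdc)).le

lemma IsCup.union (hC : IsCup f C) (hD : IsCup f D) (hCe : IsGreatest (C : Set 𝕜) e)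
    (hDe : IsLeast (D : Set 𝕜) e)
    (hjoin : ∀ a ∈ C, ∀ c ∈ D, a < e → e < c → slope f a e < slope f e c) :
    IsCup f (C ∪ D) := by
  have memC : ∀ x ∈ C ∪ D, x ≤ e → x ∈ C := fun x hx hxe => by
    rcases mem_union.mp hx with hx | hx
    · exact hx
    · exact (le_antisymm hxe (hDe.2 hx)) ▸ hCe.1
  have memD : ∀ x ∈ C ∪ D, e ≤ x → x ∈ D := fun x hx hex => by
    rcases mem_union.mp hx with hx | hx
    · exact (le_antisymm (hCe.2 hx) hex) ▸ hDe.1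
    · exact hx
  intro a ha b hb c hc hab hbc
  by_cases hce : c ≤ e
  · exact hC a (memC a ha (by order)) b (memC b hb (by order)) c (memC c hc hce) hab hbc
  by_cases hea : e ≤ a
  · exact hD a (memD a ha hea) b (memD b hb (by order)) c (memD c hc (by order)) hab hbc
  rw [not_le] at hce hea
  have haC := memC a ha hea.le
  have hcD := memD c hc hce.le
  rcases lt_trichotomy b e with hbe | rfl | heb
  · have hbC := memC b hb hbe.le
    calc slope f a b < slope f b e := hC a haC b hbC e hCe.1 hab hbe
      _ < slope f b c := (slope_lt_slope_iff_left hbe hce).mp (hjoin b hbC c hcD hbe hce)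
  · exact hjoin a haC c hcD hea hce
  · have hbD := memD b hb heb.le
    calc slope f a b < slope f e b :=
          (slope_lt_slope_iff_right hea heb).mp (hjoin a haC b hbD hea heb)
      _ < slope f b c := hD e hDe.1 b hbD c hcD heb hbc

lemma IsCup.insert_right (hC : IsCup f C) (hCe : IsGreatest (C : Set 𝕜) e) (hp : p ∈ C)
    (hpe : p < e) (hpred : ∀ a ∈ C, a < e → a ≤ p) (hed : e < d)
    (hslope : slope f p e < slope f e d) : IsCup f (insert d C) := by
  have hcup : IsCup f (C ∪ {e, d}) := by
    refine hC.union (isCup_of_card_le_two card_le_two) hCe ⟨by simp, by simp [hed.le]⟩ ?_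
    intro a ha c hc hae hec
    obtain rfl : c = d := by simpa [hec.ne'] using hc
    exact (hC.slope_le_slope_left ha hp hCe.1 (hpred a ha hae) hpe).trans_lt hslope
  exact hcup.subset (insert_subset (by simp) subset_union_left)

lemma IsCup.insert_left (hD : IsCup f D) (hDe : IsLeast (D : Set 𝕜) e) (hd : d ∈ D)
    (hed : e < d) (hsucc : ∀ c ∈ D, e < c → d ≤ c) (hpe : p < e)
    (hslope : slope f p e < slope f e d) : IsCup f (insert p D) := by
  have hcup : IsCup f ({p, e} ∪ D) := by
    refine (isCup_of_card_le_two card_le_two).union hD ⟨by simp, by simp [hpe.le]⟩ hDe ?_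
    intro a ha c hc hae hec
    obtain rfl : a = p := by simpa [hae.ne] using ha
    exact hslope.trans_le (hD.slope_le_slope_right hDe.1 hd hc hed (hsucc c hc hec))
  exact hcup.subset (insert_subset (by simp) subset_union_right)

lemma exists_cup_or_cap_of_join (hX : GraphGenPos f X) (hCX : C ⊆ X) (hDX : D ⊆ X)
    (hC : IsCup f C) (hD : IsCup (-f) D) (hCe : IsGreatest (C : Set 𝕜) e)
    (hDe : IsLeast (D : Set 𝕜) e) (hC2 : 2 ≤ #C) (hD2 : 2 ≤ #D) :
    (∃ s ⊆ X, #s = #C + 1 ∧ IsCup f s) ∨ (∃ s ⊆ X, #s = #D + 1 ∧ IsCup (-f) s) := by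
  obtain ⟨p, hpC, hpe, hpred⟩ : ∃ p ∈ C, p < e ∧ ∀ a ∈ C, a < e → a ≤ p := by
    obtain ⟨a, ha, hae⟩ := exists_mem_ne hC2 e
    exact exists_max_lt ⟨a, ha, (hCe.2 ha).lt_of_ne hae⟩
  obtain ⟨d, hdD, hed, hsucc⟩ : ∃ d ∈ D, e < d ∧ ∀ c ∈ D, e < c → d ≤ c := by
    obtain ⟨c, hc, hce⟩ := exists_mem_ne hD2 e
    exact exists_min_gt ⟨c, hc, (hDe.2 hc).lt_of_ne hce.symm⟩
  rcases (hX p (hCX hpC) e (hCX hCe.1) d (hDX hdD) hpe hed).lt_or_gt with h | h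
  · refine Or.inl ⟨insert d C, insert_subset (hDX hdD) hCX, ?_, ?_⟩
    · exact card_insert_of_notMem fun hdC => (hCe.2 hdC).not_gt hed
    · exact hC.insert_right hCe hpC hpe hpred hed h
  · refine Or.inr ⟨insert p D, insert_subset (hCX hpC) hDX, ?_, ?_⟩
    · exact card_insert_of_notMem fun hpD => (hDe.2 hpD).not_gt hpe
    · exact hD.insert_left hDe hdD hed hsucc hpe (by simpa using h)

theorem exists_cup_or_cap (hX : GraphGenPos f X) (a b : ℕ) (hcard : (a + b).choose a < #X) :
    (∃ s ⊆ X, #s = a + 2 ∧ IsCup f s) ∨ (∃ s ⊆ X, #s = b + 2 ∧ IsCup (-f) s) := by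
  induction a generalizing b X with
  | zero =>
    rw [Nat.choose_zero_right] at hcard
    obtain ⟨s, hsX, hs⟩ := exists_subset_card_eq (s := X) (n := 2) (by omega)
    exact Or.inl ⟨s, hsX, hs, isCup_of_card_le_two hs.le⟩
  | succ a iha =>
  induction b generalizing X with
  | zero =>
    rw [Nat.add_zero, Nat.choose_self] at hcard
    obtain ⟨s, hsX, hs⟩ := exists_subset_card_eq (s := X) (n := 2) (by omega)
    exact Or.inr ⟨s, hsX, hs, isCup_of_card_le_two hs.le⟩
  | succ b ihb =>
    classical
    set E := X.filter fun e => ∃ C ⊆ X, #C = a + 2 ∧ IsCup f C ∧ IsGreatest (C : Set 𝕜) e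
    have hEX : E ⊆ X := filter_subset _ X
    have hpascal : (a + 1 + (b + 1)).choose (a + 1) =
        (a + (b + 1)).choose a + (a + 1 + b).choose (a + 1) := by
      rw [show a + 1 + (b + 1) = a + (b + 1) + 1 by omega, Nat.choose_succ_succ',
        show a + (b + 1) = a + 1 + b by omega]
    have hsplit := card_sdiff_add_card_eq_card hEX
    by_cases hE : (a + 1 + b).choose (a + 1) < #E
    · rcases ihb (hX.subset hEX) hE with ⟨s, hsE, hs, hcup⟩ | ⟨D, hDE, hD, hcap⟩
      · exact Or.inl ⟨s, hsE.trans hEX, hs, hcup⟩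
      have hDne : D.Nonempty := card_pos.mp (by omega)
      obtain ⟨-, C, hCX, hC, hcup, hCe⟩ := mem_filter.mp (hDE (D.min'_mem hDne))
      have := exists_cup_or_cap_of_join hX hCX (hDE.trans hEX) hcup hcap hCe
        (D.isLeast_min' hDne) (by omega) (by omega)
      rwa [hC, hD] at this
    · rcases iha (hX.subset (sdiff_subset (t := E))) (b + 1) (by omega) with
        ⟨C, hCE, hC, hcup⟩ | ⟨D, hDE, hD, hcap⟩
      · -- the right end of `C` would lie in `E`
        have hCne : C.Nonempty := card_pos.mp (by omega)
        have hCX : C ⊆ X := hCE.trans sdiff_subset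
        exact absurd (mem_filter.mpr ⟨hCX (C.max'_mem hCne), C, hCX, hC, hcup,
          C.isGreatest_max' hCne⟩) (mem_sdiff.mp (hCE (C.max'_mem hCne))).2
      · exact Or.inr ⟨D, hDE.trans sdiff_subset, hD, hcap⟩

lemma IsCup.sub_mul_self (hC : IsCup f C) (m : 𝕜) : IsCup (fun t => f t - m * t) C := by
  intro a ha b hb c hc hab hbc
  rw [slope_sub_mul_self f m hab.ne, slope_sub_mul_self f m hbc.ne]
  exact sub_lt_sub_right (hC a ha b hb c hc hab hbc) m

lemma IsCup.lt_of_slope_eq_zero {l x r s : 𝕜} (hC : IsCup f C) (hl : l ∈ C) (hx : x ∈ C)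
    (hr : r ∈ C) (hlx : l < x) (hxr : x < r) (hlr : slope f l r = 0)
    (hgap : ∀ s ∈ C, l < s → s < r → s = x) (hs : s ∈ C) (hsx : s ≠ x) : f x < f s := by
  have hxl : f x < f l := (slope_neg_iff_of_le hlx.le).mp
    (hlr ▸ (slope_lt_slope_iff_left hlx hxr).mp (hC l hl x hx r hr hlx hxr))
  rcases le_or_gt s l with hsl | hls
  · have hrs : f r ≤ f s := (slope_nonpos_iff_of_le (hsl.trans (hlx.trans hxr).le)).mp
      (hlr ▸ hC.slope_le_slope_left hs hl hr hsl (hlx.trans hxr))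
    linarith [eq_of_slope_eq_zero hlr]
  · have hrs : r ≤ s := not_lt.mp fun hsr => hsx (hgap s hs hls hsr)
    have hls' : f l ≤ f s := (slope_nonneg_iff_of_le hls.le).mp
      (hlr ▸ hC.slope_le_slope_right hl hr hs (hlx.trans hxr) hrs)
    exact hxl.trans_le hls'

lemma IsCup.exists_linear_lt {x : 𝕜} (hC : IsCup f C) (hx : x ∈ C) :
    ∃ φ : 𝕜 × 𝕜 →ₗ[𝕜] 𝕜, ∀ s ∈ C, s ≠ x → φ (x, f x) < φ (s, f s) := by
  by_cases hl : ∃ l ∈ C, l < x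
  · by_cases hr : ∃ r ∈ C, x < r
    · -- the line through the neighbours `l` and `r` of `x`, made horizontal by a shear
      obtain ⟨l, hlC, hlx, hlmax⟩ := exists_max_lt hl
      obtain ⟨r, hrC, hxr, hrmin⟩ := exists_min_gt hr
      set m := slope f l r
      refine ⟨LinearMap.snd 𝕜 𝕜 𝕜 - m • LinearMap.fst 𝕜 𝕜 𝕜, fun s hs hsx => ?_⟩
      have hgap : ∀ s ∈ C, l < s → s < r → s = x := fun s hs hls hsr => by
        by_contra hsx
        rcases lt_or_gt_of_ne hsx with h | h
        · exact (hlmax s hs h).not_gt hls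
        · exact (hrmin s hs h).not_gt hsr
      have hlr : slope (fun t => f t - m * t) l r = 0 := by
        rw [slope_sub_mul_self f m (hlx.trans hxr).ne, sub_self]
      simpa using (hC.sub_mul_self m).lt_of_slope_eq_zero hlC hx hrC hlx hxr hlr hgap hs hsx
    · refine ⟨-LinearMap.fst 𝕜 𝕜 𝕜, fun s hs hsx => ?_⟩
      simpa using (not_lt.mp fun h => hr ⟨s, hs, h⟩).lt_of_ne hsx
  · refine ⟨LinearMap.fst 𝕜 𝕜 𝕜, fun s hs hsx => ?_⟩
    simpa using (not_lt.mp fun h => hl ⟨s, hs, h⟩).lt_of_ne' hsx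

end Cups

lemma notMem_convexHull_of_lt {𝕜 E : Type*} [Field 𝕜] [LinearOrder 𝕜] [IsStrictOrderedRing 𝕜]
    [AddCommGroup E] [Module 𝕜 E] (φ : E →ₗ[𝕜] 𝕜) {s : Set E} {x : E}
    (h : ∀ z ∈ s, φ x < φ z) : x ∉ convexHull 𝕜 s :=
  fun hx => lt_irrefl (φ x) (convexHull_min h (convex_halfSpace_gt φ.isLinear (φ x)) hx)

lemma convexPos_image_of_exists_linear_lt {ι : Type*} {S : Finset ι} {g : ι → ℝ × ℝ}
    (h : ∀ x ∈ S, ∃ φ : ℝ × ℝ →ₗ[ℝ] ℝ, ∀ s ∈ S, s ≠ x → φ (g x) < φ (g s)) :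
    ConvexPos (S.image g) := by
  intro p hp
  obtain ⟨x, hx, rfl⟩ := mem_image.mp hp
  obtain ⟨φ, hφ⟩ := h x hx
  refine notMem_convexHull_of_lt φ fun z hz => ?_
  obtain ⟨hzx, hz⟩ := mem_erase.mp hz
  obtain ⟨s, hs, rfl⟩ := mem_image.mp hz
  exact hφ s hs (ne_of_apply_ne g hzx)

lemma IsCup.convexPos_image {y : ℝ → ℝ} {S : Finset ℝ} (hS : IsCup y S)
    (T : (ℝ × ℝ) ≃ₗ[ℝ] ℝ × ℝ) : ConvexPos (S.image fun t => T (t, y t)) := by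
  refine convexPos_image_of_exists_linear_lt fun x hx => ?_
  obtain ⟨φ, hφ⟩ := hS.exists_linear_lt hx
  exact ⟨φ ∘ₗ T.symm.toLinearMap, by simpa using hφ⟩

lemma IsCup.convexPos_image_of_neg {y : ℝ → ℝ} {S : Finset ℝ} (hS : IsCup (-y) S)
    (T : (ℝ × ℝ) ≃ₗ[ℝ] ℝ × ℝ) : ConvexPos (S.image fun t => T (t, y t)) := by
  simpa using hS.convexPos_image (((LinearEquiv.refl ℝ ℝ).prodCongr (LinearEquiv.neg ℝ)).trans T)

lemma injective_linearEquiv_graph (T : (ℝ × ℝ) ≃ₗ[ℝ] ℝ × ℝ) (y : ℝ → ℝ) :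
    Function.Injective fun t => T (t, y t) :=
  fun _ _ hst => congrArg Prod.fst (T.injective hst)

lemma GenPos.graphGenPos {T : (ℝ × ℝ) ≃ₗ[ℝ] ℝ × ℝ} {X : Finset ℝ} {y : ℝ → ℝ}
    (h : GenPos (X.image fun t => T (t, y t))) : GraphGenPos y X := by
  intro a ha b hb c hc hab hbc hslope
  have hinj := injective_linearEquiv_graph T y
  exact h _ (mem_image_of_mem _ ha) _ (mem_image_of_mem _ hb) _ (mem_image_of_mem _ hc)
    (hinj.ne hab.ne) (hinj.ne (hab.trans hbc).ne) (hinj.ne hbc.ne)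
    (collinear_of_slope_eq T.toLinearMap hslope)

lemma exists_injOn_add_mul (P : Finset (ℝ × ℝ)) :
    ∃ c : ℝ, Set.InjOn (fun p : ℝ × ℝ => p.1 + c * p.2) P := by
  -- two points with distinct ordinates collide for exactly one value of `c`
  obtain ⟨c, hc⟩ := Infinite.exists_notMem_finset
    ((P ×ˢ P).image fun pq => (pq.2.1 - pq.1.1) / (pq.1.2 - pq.2.2))
  refine ⟨c, fun p hp q hq hpq => ?_⟩
  simp only at hpq
  by_cases h2 : p.2 = q.2
  · exact Prod.ext (by rw [h2] at hpq; linarith) h2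
  · refine absurd (mem_image.mpr ⟨(p, q), mem_product.mpr ⟨hp, hq⟩, ?_⟩) hc
    field_simp [sub_ne_zero.mpr h2]
    linarith

lemma exists_linearEquiv_graph (P : Finset (ℝ × ℝ)) :
    ∃ (T : (ℝ × ℝ) ≃ₗ[ℝ] ℝ × ℝ) (X : Finset ℝ) (y : ℝ → ℝ),
      P = X.image fun t => T (t, y t) := by
  obtain ⟨c, hc⟩ := exists_injOn_add_mul P
  let U : (ℝ × ℝ) ≃ₗ[ℝ] ℝ × ℝ :=
    { toFun := fun p => (p.1 + c * p.2, p.2)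
      invFun := fun p => (p.1 - c * p.2, p.2)
      map_add' := fun p q => Prod.ext (by simp only [Prod.fst_add, Prod.snd_add]; ring) rfl
      map_smul' := fun a p =>
        Prod.ext (by simp only [Prod.smul_fst, Prod.smul_snd, smul_eq_mul, RingHom.id_apply]; ring)
          rfl
      left_inv := fun p => by simp
      right_inv := fun p => by simp }
  let ℓ := fun p : ℝ × ℝ => p.1 + c * p.2
  refine ⟨U.symm, P.image ℓ, fun t => (Function.invFunOn ℓ P t).2, ?_⟩
  rw [image_image]
  refine image_id.symm.trans (image_congr fun p hp => ?_)
  have hinv : Function.invFunOn ℓ P (ℓ p) = p := hc.leftInvOn_invFunOn hp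
  simp [hinv, U, ℓ]

theorem exists_convexPos_subset (n : ℕ) {P : Finset (ℝ × ℝ)} (hP : GenPos P)
    (hcard : (n + n).choose n < #P) : ∃ S ⊆ P, #S = n + 2 ∧ ConvexPos S := by
  obtain ⟨T, X, y, rfl⟩ := exists_linearEquiv_graph P
  have hinj := injective_linearEquiv_graph T y
  rw [card_image_of_injective _ hinj] at hcard
  rcases exists_cup_or_cap hP.graphGenPos n n hcard with ⟨S, hSX, hS, hcup⟩ | ⟨S, hSX, hS, hcap⟩
  · exact ⟨_, image_subset_image hSX, by rw [card_image_of_injective _ hinj, hS],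
      hcup.convexPos_image T⟩
  · exact ⟨_, image_subset_image hSX, by rw [card_image_of_injective _ hinj, hS],
      hcap.convexPos_image_of_neg T⟩

/-- Erdős–Szekeres: for every `k ≥ 3` there is a smallest integer `g` such that
every set of at least `g` points in general position in the plane contains `k`
points in convex position. -/
theorem erdos_szekeres (k : ℕ) (hk : 3 ≤ k) :
    ∃ g : ℕ,
      (∀ P : Finset (ℝ × ℝ), GenPos P → g ≤ P.card →
        ∃ S ⊆ P, S.card = k ∧ ConvexPos S) ∧
      (∀ g' < g, ¬ ∀ P : Finset (ℝ × ℝ), GenPos P → g' ≤ P.card →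
        ∃ S ⊆ P, S.card = k ∧ ConvexPos S) := by
  classical
  obtain ⟨n, rfl⟩ : ∃ n, k = n + 2 := ⟨k - 2, by omega⟩
  have hbound : ∃ g : ℕ, ∀ P : Finset (ℝ × ℝ), GenPos P → g ≤ #P →
      ∃ S ⊆ P, #S = n + 2 ∧ ConvexPos S :=
    ⟨(n + n).choose n + 1, fun P hP hcard => exists_convexPos_subset n hP hcard⟩
  exact ⟨Nat.find hbound, Nat.find_spec hbound, fun g' => Nat.find_min hbound⟩
end

section
/- Every set of 5 points in the plane in general position contains 4 points forming an empty convex quadrilateral, i.e., h(4) = 5 ≤ 5: among any 5 points in general position there exist 4 points in convex position whose convex hull contains none of the remaining points. -/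
/-! Let `a` be the lexicographically smallest point. The other four points are then ordered
counterclockwise around `a`, say `b, c, d, e`. If `c d e` turns left, `a c d e` is a convex
quadrilateral and `b` lies beyond its edge `a c`; if `c d e` turns right but `b c d` turns left,
`a b c d` is convex and `e` lies beyond its edge `c d`; if both turn right, `b c d e` is convex and
`a` lies beyond its edge `c d`. A point beyond an edge is outside the interior of the hull. -/

open Topology

-- twice the signed area of the triangle `u v w`, positive iff `u v w` turns counterclockwise
noncomputable def orient (u v w : ℝ × ℝ) : ℝ :=
  (v.1 - u.1) * (w.2 - u.2) - (v.2 - u.2) * (w.1 - u.1)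

lemma orient_rotate (u v w : ℝ × ℝ) : orient u v w = orient v w u := by
  unfold orient; ring

lemma orient_swap (u v w : ℝ × ℝ) : orient u w v = -orient u v w := by
  unfold orient; ring

@[simp]
lemma orient_self_right (u v : ℝ × ℝ) : orient u v v = 0 := by
  unfold orient; ring

@[simp]
lemma orient_self_left (u v : ℝ × ℝ) : orient u u v = 0 := by
  unfold orient; ring

@[simp]
lemma orient_self_outer (u v : ℝ × ℝ) : orient u v u = 0 := by
  unfold orient; ring

lemma ne_of_orient_pos {u v w : ℝ × ℝ} (h : 0 < orient u v w) :
    u ≠ v ∧ u ≠ w ∧ v ≠ w := by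
  refine ⟨?_, ?_, ?_⟩ <;> rintro rfl <;> simp at h

lemma sq_add_sq_pos_of_ne {u v : ℝ × ℝ} (h : u ≠ v) :
    0 < (v.1 - u.1) ^ 2 + (v.2 - u.2) ^ 2 := by
  by_contra! h'
  refine h (Prod.ext ?_ ?_) <;> nlinarith [sq_nonneg (v.1 - u.1), sq_nonneg (v.2 - u.2)]

lemma collinear_of_orient_eq_zero {p q r : ℝ × ℝ} (h : orient p q r = 0) :
    Collinear ℝ ({p, q, r} : Set (ℝ × ℝ)) := by
  rcases eq_or_ne p q with rfl | hpq
  · simpa using collinear_pair ℝ p r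
  have hN := (sq_add_sq_pos_of_ne hpq).ne'
  rw [collinear_iff_of_mem (Set.mem_insert p _)]
  refine ⟨q - p, ?_⟩
  simp only [Set.mem_insert_iff, Set.mem_singleton_iff, forall_eq_or_imp, forall_eq]
  refine ⟨⟨0, by simp⟩, ⟨1, by simp⟩, ?_⟩
  -- project `r - p` onto `q - p`; the perpendicular component is `orient p q r = 0`
  refine ⟨((r.1 - p.1) * (q.1 - p.1) + (r.2 - p.2) * (q.2 - p.2)) /
    ((q.1 - p.1) ^ 2 + (q.2 - p.2) ^ 2), ?_⟩
  unfold orient at h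
  ext <;> simp <;> field_simp
  · linear_combination -(q.2 - p.2) * h
  · linear_combination (q.1 - p.1) * h

lemma GenPos.orient_ne_zero {P : Finset (ℝ × ℝ)} (hP : GenPos P) {p q r : ℝ × ℝ}
    (hp : p ∈ P) (hq : q ∈ P) (hr : r ∈ P) (hpq : p ≠ q) (hpr : p ≠ r) (hqr : q ≠ r) :
    orient p q r ≠ 0 :=
  fun h => hP p hp q hq r hr hpq hpr hqr (collinear_of_orient_eq_zero h)

lemma convex_orient_nonneg (u v : ℝ × ℝ) :
    Convex ℝ {w : ℝ × ℝ | 0 ≤ orient u v w} := by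
  intro x hx y hy a b ha hb hab
  have h : orient u v (a • x + b • y) = a * orient u v x + b * orient u v y := by
    simp only [orient, Prod.fst_add, Prod.snd_add, Prod.smul_fst, Prod.smul_snd,
      smul_eq_mul]
    linear_combination ((v.1 - u.1) * u.2 - (v.2 - u.2) * u.1) * hab
  simp only [Set.mem_ofPred_eq, h] at hx hy ⊢
  positivity

lemma notMem_interior_of_subset_orient_nonneg {u v p : ℝ × ℝ} {K : Set (ℝ × ℝ)}
    (huv : u ≠ v) (hK : K ⊆ {w | 0 ≤ orient u v w}) (hp : orient u v p ≤ 0) :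
    p ∉ interior K := by
  intro hpK
  set n : ℝ × ℝ := (v.2 - u.2, u.1 - v.1)
  have hmove : ∀ t : ℝ, orient u v (p + t • n) =
      orient u v p - t * ((v.1 - u.1) ^ 2 + (v.2 - u.2) ^ 2) := fun t => by
    simp only [orient, n, Prod.fst_add, Prod.snd_add, Prod.smul_fst, Prod.smul_snd,
      smul_eq_mul]
    ring
  have hnear : ∀ᶠ t : ℝ in 𝓝 0, p + t • n ∈ K := by
    have hcont : Continuous fun t : ℝ => p + t • n := by fun_prop
    have := hcont.tendsto 0
    simp only [zero_smul, add_zero] at this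
    exact this.eventually (mem_interior_iff_mem_nhds.mp hpK)
  obtain ⟨t, ht, htK⟩ := hnear.exists_gt
  have := hK htK
  simp only [Set.mem_ofPred_eq, hmove] at this
  nlinarith [mul_pos ht (sq_add_sq_pos_of_ne huv)]

lemma convexHull_subset_orient_nonneg {u v : ℝ × ℝ} {s : Set (ℝ × ℝ)}
    (hs : ∀ w ∈ s, 0 ≤ orient u v w) : convexHull ℝ s ⊆ {w | 0 ≤ orient u v w} :=
  convexHull_min hs (convex_orient_nonneg u v)

def IsCCWQuad (w x y z : ℝ × ℝ) : Prop :=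
  0 < orient w x y ∧ 0 < orient x y z ∧ 0 < orient y z w ∧ 0 < orient z w x

lemma IsCCWQuad.rotate {w x y z : ℝ × ℝ} (h : IsCCWQuad w x y z) : IsCCWQuad x y z w :=
  ⟨h.2.1, h.2.2.1, h.2.2.2, h.1⟩

-- the diagonal `z x` separates `w` from the other three vertices
lemma IsCCWQuad.notMem_convexHull {w x y z : ℝ × ℝ} (h : IsCCWQuad w x y z) :
    w ∉ convexHull ℝ ({x, y, z} : Set (ℝ × ℝ)) := by
  intro hw
  have hsub := convexHull_subset_orient_nonneg (u := z) (v := x) (s := {x, y, z}) (by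
    simp only [Set.mem_insert_iff, Set.mem_singleton_iff, forall_eq_or_imp, forall_eq]
    simpa [orient_rotate z x y] using h.2.1.le)
  have := hsub hw
  simp only [Set.mem_ofPred_eq] at this
  linarith [h.2.2.2, orient_rotate z w x, orient_swap z x w]

lemma IsCCWQuad.convexPos {w x y z : ℝ × ℝ} (h : IsCCWQuad w x y z) :
    ConvexPos {w, x, y, z} := by
  have hw := h.notMem_convexHull
  have hx := h.rotate.notMem_convexHull
  have hy := h.rotate.rotate.notMem_convexHull
  have hz := h.rotate.rotate.rotate.notMem_convexHull
  intro p hp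
  simp only [Finset.mem_insert, Finset.mem_singleton] at hp
  rcases hp with rfl | rfl | rfl | rfl
  · exact fun hmem => hw (convexHull_mono (fun q hq => by simp at hq ⊢; tauto) hmem)
  · exact fun hmem => hx (convexHull_mono (fun q hq => by simp at hq ⊢; tauto) hmem)
  · exact fun hmem => hy (convexHull_mono (fun q hq => by simp at hq ⊢; tauto) hmem)
  · exact fun hmem => hz (convexHull_mono (fun q hq => by simp at hq ⊢; tauto) hmem)

lemma IsCCWQuad.card_eq {w x y z : ℝ × ℝ} (h : IsCCWQuad w x y z) :
    ({w, x, y, z} : Finset (ℝ × ℝ)).card = 4 := by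
  obtain ⟨hwx, hwy, -⟩ := ne_of_orient_pos h.1
  obtain ⟨hxy, hxz, hyz⟩ := ne_of_orient_pos h.2.1
  obtain ⟨-, -, hzw⟩ := ne_of_orient_pos h.2.2.1
  rw [Finset.card_insert_of_notMem (by simp [hwx, hwy, hzw.symm]),
    Finset.card_insert_of_notMem (by simp [hxy, hxz]), Finset.card_pair hyz]

lemma IsCCWQuad.exists_empty_of_orient_nonpos {P : Finset (ℝ × ℝ)} {w x y z p : ℝ × ℝ}
    (h : IsCCWQuad w x y z) (hS : {w, x, y, z} ⊆ P) (hP : P ⊆ insert p {w, x, y, z})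
    (hp : orient w x p ≤ 0) :
    ∃ S ⊆ P, S.card = 4 ∧ ConvexPos S ∧
      ∀ q ∈ P, q ∉ S → q ∉ interior (convexHull ℝ (↑S : Set (ℝ × ℝ))) := by
  refine ⟨_, hS, h.card_eq, h.convexPos, fun q hqP hqS => ?_⟩
  obtain rfl : q = p := by simpa [hqS] using hP hqP
  refine notMem_interior_of_subset_orient_nonneg (ne_of_orient_pos h.1).1
    (convexHull_subset_orient_nonneg ?_) hp
  simp only [Finset.coe_insert, Finset.coe_singleton, Set.mem_insert_iff, Set.mem_singleton_iff,
    forall_eq_or_imp, forall_eq, orient_self_outer, orient_self_right, le_refl, true_and]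
  exact ⟨h.1.le, h.2.2.2.le.trans_eq (orient_rotate z w x)⟩

lemma Finset.exists_fin_enum_of_strictTotal {α : Type*} {s : Finset α} {n : ℕ} (hs : s.card = n)
    (r : α → α → Prop)
    (irrefl : ∀ x ∈ s, ¬ r x x)
    (trans : ∀ x ∈ s, ∀ y ∈ s, ∀ z ∈ s, r x y → r y z → r x z)
    (total : ∀ x ∈ s, ∀ y ∈ s, x ≠ y → r x y ∨ r y x) :
    ∃ f : Fin n → α, (∀ i j, i < j → r (f i) (f j)) ∧
      ∀ x, x ∈ s ↔ ∃ i, f i = x := by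
  classical
  let rs : s → s → Prop := fun x y => r x y
  have : IsStrictTotalOrder s rs :=
    { trichotomous := fun x y hxy hyx => by
        by_contra hne
        rcases total x x.2 y y.2 (fun h => hne (Subtype.ext h)) with h | h
        exacts [hxy h, hyx h]
      irrefl := fun x => irrefl x x.2
      trans := fun x y z => trans x x.2 y y.2 z z.2 }
  let _ : LinearOrder s := linearOrderOfSTO rs
  let g := Fintype.orderIsoFinOfCardEq s (by simpa using hs)
  refine ⟨fun i => g i, fun i j hij => g.strictMono hij, fun x => ⟨fun hx => ?_, ?_⟩⟩
  · exact ⟨g.symm ⟨x, hx⟩, by simp⟩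
  · rintro ⟨i, rfl⟩
    exact (g i).2

-- a point straight above `a` makes a clockwise turn with every point to the right of `a`
lemma fst_lt_of_orient_pos {a y z : ℝ × ℝ} (hy : toLex a < toLex y) (hz : a.1 ≤ z.1)
    (h : 0 < orient a y z) : a.1 < y.1 := by
  rw [Prod.Lex.toLex_lt_toLex] at hy
  rcases hy with hy | ⟨hy1, hy2⟩
  · exact hy
  · unfold orient at h
    rw [← hy1, sub_self, zero_mul, zero_sub] at h
    nlinarith [mul_nonneg (sub_nonneg.2 hy2.le) (sub_nonneg.2 hz)]

lemma orient_pos_trans {a x y z : ℝ × ℝ} (hx : toLex a < toLex x) (hy : toLex a < toLex y)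
    (hz : toLex a < toLex z) (hxy : 0 < orient a x y) (hyz : 0 < orient a y z) :
    0 < orient a x z := by
  have fst_le : ∀ {w : ℝ × ℝ}, toLex a < toLex w → a.1 ≤ w.1 := fun hw => by
    rcases Prod.Lex.toLex_lt_toLex.1 hw with h | h
    exacts [h.le, h.1.le]
  have hy1 := fst_lt_of_orient_pos hy (fst_le hz) hyz
  have hx1 := fst_lt_of_orient_pos hx hy1.le hxy
  have key : orient a x z * (y.1 - a.1) =
      orient a x y * (z.1 - a.1) + orient a y z * (x.1 - a.1) := by
    unfold orient; ring
  have : 0 < orient a x z * (y.1 - a.1) := by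
    rw [key]
    nlinarith [mul_nonneg hxy.le (sub_nonneg.2 (fst_le hz)), mul_pos hyz (sub_pos.2 hx1)]
  exact pos_of_mul_pos_left this (sub_pos.2 hy1).le

lemma GenPos.exists_radially_sorted {P : Finset (ℝ × ℝ)} (hcard : P.card = 5)
    (hgen : GenPos P) :
    ∃ a b c d e : ℝ × ℝ, P = {a, b, c, d, e} ∧
      0 < orient a b c ∧ 0 < orient a b d ∧ 0 < orient a b e ∧
      0 < orient a c d ∧ 0 < orient a c e ∧ 0 < orient a d e := by
  obtain ⟨a, haP, hmin⟩ := P.exists_min_image toLex (Finset.card_pos.1 (by omega))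
  have hlex : ∀ x ∈ P.erase a, toLex a < toLex x := fun x hx =>
    (hmin x (Finset.mem_of_mem_erase hx)).lt_of_ne
      (toLex.injective.ne (Finset.ne_of_mem_erase hx).symm)
  have hQ : (P.erase a).card = 4 := by rw [Finset.card_erase_of_mem haP, hcard]
  obtain ⟨f, hf, hfP⟩ := Finset.exists_fin_enum_of_strictTotal hQ (fun x y => 0 < orient a x y)
    (fun x _ => by simp)
    (fun x hx y hy z hz => orient_pos_trans (hlex x hx) (hlex y hy) (hlex z hz))
    (fun x hx y hy hxy => by
      have := hgen.orient_ne_zero haP (Finset.mem_of_mem_erase hx) (Finset.mem_of_mem_erase hy)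
        (Finset.ne_of_mem_erase hx).symm (Finset.ne_of_mem_erase hy).symm hxy
      exact (this.lt_or_gt.imp_left fun h => by linarith [orient_swap a x y]).symm)
  refine ⟨a, f 0, f 1, f 2, f 3, ?_, hf 0 1 (by decide), hf 0 2 (by decide), hf 0 3 (by decide),
    hf 1 2 (by decide), hf 1 3 (by decide), hf 2 3 (by decide)⟩
  rw [← Finset.insert_erase haP]
  congr 1
  ext x
  simp [hfP, Fin.exists_fin_succ, eq_comm]

lemma isCCWQuad_of_reflex_fan {a b c d e : ℝ × ℝ} (habc : 0 < orient a b c)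
    (habd : 0 < orient a b d) (hacd : 0 < orient a c d) (hace : 0 < orient a c e)
    (hade : 0 < orient a d e)
    (hbcd : orient b c d < 0) (hcde : orient c d e < 0) : IsCCWQuad d c b e := by
  have hbce : orient b c e < 0 := by
    have : orient a c d * orient b c e =
        orient c d e * orient a b c + orient b c d * orient a c e := by unfold orient; ring
    nlinarith [mul_pos (neg_pos.2 hcde) habc, mul_pos (neg_pos.2 hbcd) hace]
  have hbde : orient b d e < 0 := by
    have : orient a c d * orient b d e =
        orient c d e * orient a b d + orient b c d * orient a d e := by unfold orient; ring
    nlinarith [mul_pos (neg_pos.2 hcde) habd, mul_pos (neg_pos.2 hbcd) hade]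
  refine ⟨?_, ?_, ?_, ?_⟩
  · linarith [orient_swap b c d, orient_rotate d c b, orient_rotate c b d]
  · linarith [orient_swap b c e, orient_rotate c b e, orient_rotate b e c]
  · linarith [orient_swap b d e, orient_rotate b e d]
  · linarith [orient_swap c d e, orient_rotate e d c, orient_rotate d c e]

/-- Among any `5` points in the plane in general position there are `4` points
in convex position whose convex hull contains no other point of the set in its
interior (an empty convex quadrilateral); thus `h(4) ≤ 5`. -/
theorem empty_convex_quadrilateral (P : Finset (ℝ × ℝ)) (hcard : P.card = 5)
    (hgen : GenPos P) :
    ∃ S ⊆ P, S.card = 4 ∧ ConvexPos S ∧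
      ∀ p ∈ P, p ∉ S → p ∉ interior (convexHull ℝ (↑S : Set (ℝ × ℝ))) := by
  obtain ⟨a, b, c, d, e, rfl, habc, habd, -, hacd, hace, hade⟩ :=
    hgen.exists_radially_sorted hcard
  have hbcd := hgen.orient_ne_zero (by simp) (by simp) (by simp)
    (ne_of_orient_pos habc).2.2 (ne_of_orient_pos habd).2.2 (ne_of_orient_pos hacd).2.2
  have hcde := hgen.orient_ne_zero (by simp) (by simp) (by simp)
    (ne_of_orient_pos hacd).2.2 (ne_of_orient_pos hace).2.2 (ne_of_orient_pos hade).2.2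
  rcases hcde.lt_or_gt with hcde | hcde
  · rcases hbcd.lt_or_gt with hbcd | hbcd
    · refine (isCCWQuad_of_reflex_fan habc habd hacd hace hade hbcd hcde
        ).exists_empty_of_orient_nonpos (p := a) (by simp [Finset.insert_subset_iff])
        (by simp [Finset.insert_subset_iff]) ?_
      linarith [orient_swap a c d, orient_rotate a d c]
    · have hq : IsCCWQuad c d a b :=
        ⟨by linarith [orient_rotate a c d], by linarith [orient_rotate d a b], habc, hbcd⟩
      exact hq.exists_empty_of_orient_nonpos (p := e) (by simp [Finset.insert_subset_iff])
        (by simp [Finset.insert_subset_iff]) hcde.le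
  · have hq : IsCCWQuad a c d e :=
      ⟨hacd, hcde, by linarith [orient_rotate a d e], by linarith [orient_rotate e a c]⟩
    refine hq.exists_empty_of_orient_nonpos (p := b) (by simp [Finset.insert_subset_iff])
      (by simp [Finset.insert_subset_iff]) ?_
    linarith [orient_swap a b c]
end

section
/- For every pair of integers ℓ ≥ 2, every set P of at least max{7, ℓ+2} points in the plane contains ℓ collinear points or 4 pairwise mutually visible points. -/
/-- The points of `S` are pairwise mutually visible with respect to the ambient
point set `P`: for any two distinct points of `S`, the open segment between
them contains no point of `P`. -/
def PairwiseVisible (P S : Finset (ℝ × ℝ)) : Prop :=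
  ∀ p ∈ S, ∀ q ∈ S, p ≠ q → ∀ r ∈ P, r ∉ openSegment ℝ p q

/-!
Suppose `P` has no four pairwise visible points. If a line carries four points of `P` and three
points of `P` lie off it, two of these lie on the same side. The point `x` on that side nearest to
the line sees all of the line; the next one, `y`, sees `x` and all of the line except at most one
point hidden behind `x`; and two consecutive points of the line seen by `y` complete four pairwise
visible points. Hence a line through four points of `P` misses at most two of them. Such a line is
found by induction on `|P| ≥ 7`: a lexicographically extreme point blocks no segment, so it can be
removed, and the line found for the remaining points still carries `|P| - 3 ≥ 5` points.

If `|P| = 7` and no line carries four points, enumerate `P` starting from an edge `ab` of its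
convex hull, by distance from `ab` and then along `ab`. A point blocking two others comes strictly
between them in this order, and two blocking triples sharing two points coincide. A short case
analysis on which triples block which quadruples then finds four pairwise visible points, except
in one configuration that an affine computation rules out.
-/

namespace PointVisibility

open Finset

/-- Twice the signed area of the triangle `a b c`; positive iff `c` lies to the left of `a → b`. -/
def signedArea (a b c : ℝ × ℝ) : ℝ := (b.1 - a.1) * (c.2 - a.2) - (b.2 - a.2) * (c.1 - a.1)

def alongLine (a b c : ℝ × ℝ) : ℝ := (b.1 - a.1) * (c.1 - a.1) + (b.2 - a.2) * (c.2 - a.2)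

section SignedArea

variable {a b c u v r : ℝ × ℝ}

@[simp] theorem signedArea_left (a b : ℝ × ℝ) : signedArea a b a = 0 := by
  unfold signedArea; ring

@[simp] theorem signedArea_right (a b : ℝ × ℝ) : signedArea a b b = 0 := by
  unfold signedArea; ring

theorem signedArea_swap (a b c : ℝ × ℝ) : signedArea b a c = -signedArea a b c := by
  unfold signedArea; ring

theorem signedArea_smul_add_smul (a b u v : ℝ × ℝ) (t : ℝ) :
    signedArea a b ((1 - t) • u + t • v) = (1 - t) * signedArea a b u + t * signedArea a b v := by
  simp only [signedArea, Prod.fst_add, Prod.snd_add, Prod.smul_fst, Prod.smul_snd, smul_eq_mul]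
  ring

theorem alongLine_smul_add_smul (a b u v : ℝ × ℝ) (t : ℝ) :
    alongLine a b ((1 - t) • u + t • v) = (1 - t) * alongLine a b u + t * alongLine a b v := by
  simp only [alongLine, Prod.fst_add, Prod.snd_add, Prod.smul_fst, Prod.smul_snd, smul_eq_mul]
  ring

theorem signedArea_of_mem_openSegment (h : r ∈ openSegment ℝ u v) :
    ∃ t ∈ Set.Ioo (0 : ℝ) 1, ∀ a b,
      signedArea a b r = (1 - t) * signedArea a b u + t * signedArea a b v := by
  rw [openSegment_eq_image] at h
  obtain ⟨t, ht, rfl⟩ := h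
  exact ⟨t, ht, fun a b => signedArea_smul_add_smul a b u v t⟩

theorem signedArea_pos_of_mem_openSegment (hu : 0 ≤ signedArea a b u) (hv : 0 < signedArea a b v)
    (hr : r ∈ openSegment ℝ u v) : 0 < signedArea a b r := by
  obtain ⟨t, ⟨ht₀, ht₁⟩, h⟩ := signedArea_of_mem_openSegment hr
  rw [h]
  nlinarith

theorem signedArea_eq_zero_of_collinear (h : Collinear ℝ ({a, b, c} : Set (ℝ × ℝ))) :
    signedArea a b c = 0 := by
  obtain ⟨w, hw⟩ := (collinear_iff_of_mem (Set.mem_insert a _)).1 h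
  obtain ⟨s, rfl⟩ := hw b (by simp)
  obtain ⟨t, rfl⟩ := hw c (by simp)
  simp only [signedArea, vadd_eq_add, Prod.fst_add, Prod.snd_add, Prod.smul_fst, Prod.smul_snd,
    smul_eq_mul]
  ring

theorem collinear_of_forall_signedArea_eq_zero (hab : a ≠ b) {s : Set (ℝ × ℝ)}
    (hs : ∀ z ∈ s, signedArea a b z = 0) : Collinear ℝ s := by
  have hd : alongLine a b b ≠ 0 := by
    intro h
    apply hab
    simp only [alongLine] at h
    ext <;> nlinarith [sq_nonneg (b.1 - a.1), sq_nonneg (b.2 - a.2)]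
  refine (collinear_iff_exists_forall_eq_smul_vadd s).2 ⟨a, b - a, fun z hz => ?_⟩
  refine ⟨alongLine a b z / alongLine a b b, ?_⟩
  have hz := hs z hz
  unfold signedArea at hz
  have h₁ : alongLine a b z * (b.1 - a.1) = (z.1 - a.1) * alongLine a b b := by
    unfold alongLine; linear_combination (b.2 - a.2) * hz
  have h₂ : alongLine a b z * (b.2 - a.2) = (z.2 - a.2) * alongLine a b b := by
    unfold alongLine; linear_combination -(b.1 - a.1) * hz
  ext <;> simp only [vadd_eq_add, Prod.fst_add, Prod.snd_add, Prod.smul_fst, Prod.smul_snd,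
    Prod.fst_sub, Prod.snd_sub, smul_eq_mul, div_mul_eq_mul_div, h₁, h₂,
    mul_div_cancel_right₀ _ hd, sub_add_cancel]

theorem signedArea_eq_zero_iff_collinear :
    signedArea a b c = 0 ↔ Collinear ℝ ({a, b, c} : Set (ℝ × ℝ)) := by
  refine ⟨fun h => ?_, signedArea_eq_zero_of_collinear⟩
  rcases eq_or_ne a b with rfl | hab
  · simpa using collinear_pair ℝ a c
  refine collinear_of_forall_signedArea_eq_zero hab fun z hz => ?_
  rcases hz with rfl | rfl | rfl <;> simp [h]

end SignedArea

section LexOrder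

theorem toLex_between {p q : ℝ × ℝ} {t : ℝ} (ht : t ∈ Set.Ioo 0 1) (h : toLex p < toLex q) :
    toLex p < toLex ((1 - t) • p + t • q) ∧ toLex ((1 - t) • p + t • q) < toLex q := by
  obtain ⟨ht₀, ht₁⟩ := ht
  simp only [Prod.Lex.toLex_lt_toLex, Prod.fst_add, Prod.snd_add, Prod.smul_fst, Prod.smul_snd,
    smul_eq_mul] at h ⊢
  rcases h with h | ⟨h, h'⟩
  · constructor <;> left <;> nlinarith
  · have := mul_pos ht₀ (sub_pos.2 h')
    have := mul_pos (sub_pos.2 ht₁) (sub_pos.2 h')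
    exact ⟨Or.inr ⟨by rw [← h]; ring, by linarith⟩, Or.inr ⟨by rw [← h]; ring, by linarith⟩⟩

/-- Orders the plane by the distance from the line `a b` (signed), then along the line. Being the
lexicographic order of an affine chart, it puts every point of an open segment strictly between
its endpoints. -/
def lineKey (a b z : ℝ × ℝ) : ℝ ×ₗ ℝ := toLex (signedArea a b z, alongLine a b z)

variable {a b u v r : ℝ × ℝ}

theorem lineKey_injective (hab : a ≠ b) : Function.Injective (lineKey a b) := by
  intro u v h
  simp only [lineKey, toLex_inj, Prod.mk.injEq, signedArea, alongLine] at h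
  obtain ⟨h₁, h₂⟩ := h
  have hd : (b.1 - a.1) ^ 2 + (b.2 - a.2) ^ 2 ≠ 0 := by
    intro hd
    apply hab
    ext <;> nlinarith [sq_nonneg (b.1 - a.1), sq_nonneg (b.2 - a.2)]
  ext
  · apply mul_right_cancel₀ hd; linear_combination (b.1 - a.1) * h₂ - (b.2 - a.2) * h₁
  · apply mul_right_cancel₀ hd; linear_combination (b.2 - a.2) * h₂ + (b.1 - a.1) * h₁

theorem lineKey_between (hr : r ∈ openSegment ℝ u v) (huv : lineKey a b u < lineKey a b v) :
    lineKey a b u < lineKey a b r ∧ lineKey a b r < lineKey a b v := by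
  rw [openSegment_eq_image] at hr
  obtain ⟨t, ht, rfl⟩ := hr
  have : lineKey a b ((1 - t) • u + t • v) = toLex ((1 - t) •
      (signedArea a b u, alongLine a b u) + t • (signedArea a b v, alongLine a b v)) := by
    simp [lineKey, signedArea_smul_add_smul, alongLine_smul_add_smul]
  rw [this]
  exact toLex_between ht huv

theorem exists_notMem_openSegment {P : Finset (ℝ × ℝ)} (hP : P.Nonempty) :
    ∃ w ∈ P, ∀ p ∈ P, ∀ q ∈ P, p ≠ q → w ∉ openSegment ℝ p q := by
  obtain ⟨w, hw, hmax⟩ := P.exists_max_image toLex hP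
  refine ⟨w, hw, fun p hp q hq hpq hwpq => ?_⟩
  rw [openSegment_eq_image] at hwpq
  obtain ⟨t, ht, rfl⟩ := hwpq
  rcases lt_or_gt_of_ne (toLex_inj.not.2 hpq) with h | h
  · exact (toLex_between ht h).2.not_ge (hmax q hq)
  · have := toLex_between (t := 1 - t) ⟨by linarith [ht.2], by linarith [ht.1]⟩ h
    rw [sub_sub_cancel, add_comm] at this
    exact this.2.not_ge (hmax p hp)

theorem exists_bottom_edge {P : Finset (ℝ × ℝ)} (hP : 2 ≤ #P) :
    ∃ a ∈ P, ∃ b ∈ P, a ≠ b ∧ ∀ z ∈ P, 0 ≤ signedArea a b z := by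
  classical
  obtain ⟨a, ha, hmin⟩ := P.exists_min_image toLex (card_pos.1 (by omega))
  have hleft (z) (hz : z ∈ P) : a.1 < z.1 ∨ a.1 = z.1 ∧ a.2 ≤ z.2 :=
    Prod.Lex.toLex_le_toLex.1 (hmin z hz)
  by_cases hR : (P.filter fun z => a.1 < z.1).Nonempty
  · obtain ⟨b, hb, hslope⟩ := (P.filter fun z => a.1 < z.1).exists_min_image
      (fun z => (z.2 - a.2) / (z.1 - a.1)) hR
    rw [mem_filter] at hb
    refine ⟨a, ha, b, hb.1, fun h => (h ▸ hb.2).false, fun z hz => ?_⟩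
    unfold signedArea
    rcases hleft z hz with h | ⟨h, h'⟩
    · have := hslope z (mem_filter.2 ⟨hz, h⟩)
      rw [div_le_div_iff₀ (sub_pos.2 hb.2) (sub_pos.2 h)] at this
      linarith
    · rw [← h, sub_self, mul_zero, sub_zero]
      exact mul_nonneg (sub_pos.2 hb.2).le (sub_nonneg.2 h')
  · obtain ⟨b, hb, hba⟩ := exists_mem_ne hP a
    have hvert (z) (hz : z ∈ P) : z.1 = a.1 := by
      rcases hleft z hz with h | ⟨h, -⟩
      · exact absurd ⟨z, mem_filter.2 ⟨hz, h⟩⟩ hR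
      · exact h.symm
    refine ⟨a, ha, b, hb, hba.symm, fun z hz => ?_⟩
    simp [signedArea, hvert z hz, hvert b hb]

end LexOrder

theorem exists_enum_strictMono {α β : Type*} [LinearOrder β] (s : Finset α) {n : ℕ} (hs : #s = n)
    (f : α → β) (hf : Set.InjOn f s) : ∃ e : Fin n → α, StrictMono (f ∘ e) ∧ Set.range e = s := by
  classical
  have ht : #(s.image f) = n := by rw [card_image_of_injOn hf, hs]
  have hg (i : Fin n) : ∃ x ∈ s, f x = (s.image f).orderEmbOfFin ht i :=
    mem_image.1 (orderEmbOfFin_mem _ ht i)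
  choose e he hfe using hg
  refine ⟨e, fun i j hij => by simpa [hfe] using ((s.image f).orderEmbOfFin ht).strictMono hij, ?_⟩
  refine Set.Subset.antisymm (Set.range_subset_iff.2 he) fun x hx => ?_
  obtain ⟨i, hi⟩ : f x ∈ Set.range ((s.image f).orderEmbOfFin ht) := by
    rw [range_orderEmbOfFin]; exact mem_image_of_mem f hx
  exact ⟨i, hf (he i) hx (by rw [hfe, hi])⟩

section Visibility

variable {P : Finset (ℝ × ℝ)}

def Sees (P : Finset (ℝ × ℝ)) (p q : ℝ × ℝ) : Prop := ∀ r ∈ P, r ∉ openSegment ℝ p q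

theorem Sees.symm {p q : ℝ × ℝ} (h : Sees P p q) : Sees P q p :=
  fun r hr => by rw [openSegment_symm]; exact h r hr

def HasFourVisible (P : Finset (ℝ × ℝ)) : Prop := ∃ S ⊆ P, #S = 4 ∧ PairwiseVisible P S

def NoFourCollinear (P : Finset (ℝ × ℝ)) : Prop :=
  ∀ a ∈ P, ∀ b ∈ P, a ≠ b → #(P.filter (signedArea a b · = 0)) ≤ 3

theorem hasFourVisible_of_sees {p q r s : ℝ × ℝ} (hp : p ∈ P) (hq : q ∈ P) (hr : r ∈ P)
    (hs : s ∈ P) (hpq : p ≠ q) (hpr : p ≠ r) (hps : p ≠ s) (hqr : q ≠ r) (hqs : q ≠ s)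
    (hrs : r ≠ s) (spq : Sees P p q) (spr : Sees P p r) (sps : Sees P p s) (sqr : Sees P q r)
    (sqs : Sees P q s) (srs : Sees P r s) : HasFourVisible P := by
  have hpair : (({p, q, r, s} : Finset (ℝ × ℝ)) : Set (ℝ × ℝ)).Pairwise (Sees P) := by
    simp [Set.pairwise_insert, *, spq.symm, spr.symm, sps.symm, sqr.symm, sqs.symm, srs.symm]
  refine ⟨{p, q, r, s}, by simp [insert_subset_iff, *], ?_, fun x hx y hy hxy => hpair hx hy hxy⟩
  rw [card_insert_of_notMem (by simp [*]), card_insert_of_notMem (by simp [*]), card_pair hrs]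

theorem HasFourVisible.of_erase {w : ℝ × ℝ}
    (hw : ∀ p ∈ P, ∀ q ∈ P, p ≠ q → w ∉ openSegment ℝ p q) (h : HasFourVisible (P.erase w)) :
    HasFourVisible P := by
  obtain ⟨S, hS, hcard, hvis⟩ := h
  refine ⟨S, hS.trans (erase_subset _ _), hcard, fun p hp q hq hpq r hr hseg => ?_⟩
  by_cases hrw : r = w
  · exact hw p (mem_of_mem_erase (hS hp)) q (mem_of_mem_erase (hS hq)) hpq (hrw ▸ hseg)
  · exact hvis p hp q hq hpq r (mem_erase.2 ⟨hrw, hr⟩) hseg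

end Visibility

section RichLine

variable {P : Finset (ℝ × ℝ)} {a b : ℝ × ℝ}

theorem eq_of_mem_openSegment_of_mem_openSegment {s s' x y : ℝ × ℝ}
    (hs : signedArea a b s = 0) (hs' : signedArea a b s' = 0) (hy : signedArea a b y ≠ 0)
    (h : x ∈ openSegment ℝ s y) (h' : x ∈ openSegment ℝ s' y) : s = s' := by
  rw [openSegment_eq_image] at h h'
  obtain ⟨t, ⟨-, ht⟩, rfl⟩ := h
  obtain ⟨t', -, h'⟩ := h'
  dsimp only at h'
  obtain rfl : t' = t := by
    have := congrArg (signedArea a b) h'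
    rw [signedArea_smul_add_smul, signedArea_smul_add_smul, hs, hs'] at this
    exact mul_right_cancel₀ hy (by linarith)
  exact (smul_right_injective _ (sub_ne_zero.2 ht.ne') (add_right_cancel h')).symm

theorem sees_of_succ {m : ℕ} {ℓ : Fin m → ℝ × ℝ} (hℓ : StrictMono (lineKey a b ∘ ℓ))
    (hℓL : Set.range ℓ = P.filter (signedArea a b · = 0)) {i j : Fin m} (hij : i.val + 1 = j.val) :
    Sees P (ℓ i) (ℓ j) := by
  intro r hr h
  have hon (k) : signedArea a b (ℓ k) = 0 := by
    have : ℓ k ∈ Set.range ℓ := ⟨k, rfl⟩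
    rw [hℓL, mem_coe, mem_filter] at this
    exact this.2
  obtain ⟨h₁, h₂⟩ := lineKey_between h (hℓ (show i < j by omega))
  have hr₀ : signedArea a b r = 0 := by
    have h₁ := Prod.Lex.toLex_lt_toLex.1 h₁
    have h₂ := Prod.Lex.toLex_lt_toLex.1 h₂
    simp only [hon] at h₁ h₂
    rcases h₁ with h₁ | ⟨h₁, -⟩ <;> rcases h₂ with h₂ | ⟨h₂, -⟩ <;> linarith
  obtain ⟨k, rfl⟩ : r ∈ Set.range ℓ := by rw [hℓL]; exact mem_filter.2 ⟨hr, hr₀⟩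
  have := hℓ.lt_iff_lt.1 h₁
  have := hℓ.lt_iff_lt.1 h₂
  omega

theorem exists_nearest_pair_above (hab : a ≠ b) (hA : 2 ≤ #(P.filter (0 < signedArea a b ·))) :
    ∃ x ∈ P, ∃ y ∈ P, 0 < signedArea a b x ∧ 0 < signedArea a b y ∧ x ≠ y ∧ Sees P x y ∧
      ∀ ℓ, signedArea a b ℓ = 0 → Sees P ℓ x ∧ (x ∉ openSegment ℝ ℓ y → Sees P ℓ y) := by
  classical
  set A := P.filter (0 < signedArea a b ·)
  set κ := lineKey a b
  obtain ⟨x, hxA, hx⟩ := A.exists_min_image κ (card_pos.1 (by omega))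
  obtain ⟨y, hyA', hy⟩ := (A.erase x).exists_min_image κ
    (card_pos.1 (by rw [card_erase_of_mem hxA]; omega))
  obtain ⟨hyx, hyA⟩ := mem_erase.1 hyA'
  have hxy : κ x < κ y := (hx y hyA).lt_of_ne ((lineKey_injective hab).ne hyx.symm)
  rw [mem_filter] at hxA hyA
  have blocker {u v r : ℝ × ℝ} (hu : 0 ≤ signedArea a b u) (hv : 0 < signedArea a b v)
      (huv : κ u < κ v) (hr : r ∈ P) (h : r ∈ openSegment ℝ u v) :
      r ∈ A ∧ κ u < κ r ∧ κ r < κ v :=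
    ⟨mem_filter.2 ⟨hr, signedArea_pos_of_mem_openSegment hu hv h⟩, lineKey_between h huv⟩
  have below {u v : ℝ × ℝ} (hu : signedArea a b u = 0) (hv : 0 < signedArea a b v) : κ u < κ v :=
    Prod.Lex.toLex_lt_toLex.2 (Or.inl (hu ▸ hv))
  refine ⟨x, hxA.1, y, hyA.1, hxA.2, hyA.2, hyx.symm, fun r hr h => ?_,
    fun ℓ hℓ => ⟨fun r hr h => ?_, fun hidden r hr h => ?_⟩⟩
  · obtain ⟨hrA, hxr, hry⟩ := blocker hxA.2.le hyA.2 hxy hr h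
    exact (hy r (mem_erase.2 ⟨fun hrx => hxr.ne' (hrx ▸ rfl), hrA⟩)).not_gt hry
  · obtain ⟨hrA, -, hrx⟩ := blocker hℓ.ge hxA.2 (below hℓ hxA.2) hr h
    exact (hx r hrA).not_gt hrx
  · obtain ⟨hrA, -, hry⟩ := blocker hℓ.ge hyA.2 (below hℓ hyA.2) hr h
    by_cases hrx : r = x
    · exact hidden (hrx ▸ h)
    · exact (hy r (mem_erase.2 ⟨hrx, hrA⟩)).not_gt hry

theorem hasFourVisible_of_two_above (hab : a ≠ b) (hL : 4 ≤ #(P.filter (signedArea a b · = 0)))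
    (hA : 2 ≤ #(P.filter (0 < signedArea a b ·))) : HasFourVisible P := by
  obtain ⟨x, hxP, y, hyP, hx, hy, hxy, sees_xy, sees_line⟩ := exists_nearest_pair_above hab hA
  obtain ⟨ℓ, hℓ, hℓL⟩ := exists_enum_strictMono (P.filter (signedArea a b · = 0)) rfl (lineKey a b)
    (lineKey_injective hab).injOn
  have hℓP (i) : ℓ i ∈ P ∧ signedArea a b (ℓ i) = 0 := by
    have : ℓ i ∈ Set.range ℓ := ⟨i, rfl⟩
    rwa [hℓL, mem_coe, mem_filter] at this
  have finish {i j : Fin _} (hij : i.val + 1 = j.val) (hi : x ∉ openSegment ℝ (ℓ i) y)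
      (hj : x ∉ openSegment ℝ (ℓ j) y) : HasFourVisible P := by
    have hne {k} {z : ℝ × ℝ} (hz : 0 < signedArea a b z) : ℓ k ≠ z :=
      fun h => (h ▸ hz).ne' (hℓP k).2
    exact hasFourVisible_of_sees (hℓP i).1 (hℓP j).1 hxP hyP (hℓ.injective.of_comp.ne (by omega))
      (hne hx) (hne hy) (hne hx) (hne hy) hxy (sees_of_succ hℓ hℓL hij)
      (sees_line _ (hℓP i).2).1 ((sees_line _ (hℓP i).2).2 hi) (sees_line _ (hℓP j).2).1
      ((sees_line _ (hℓP j).2).2 hj) sees_xy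
  have unique {i j} (hi : x ∈ openSegment ℝ (ℓ i) y) (hj : x ∈ openSegment ℝ (ℓ j) y) : i = j :=
    hℓ.injective.of_comp
      (eq_of_mem_openSegment_of_mem_openSegment (hℓP i).2 (hℓP j).2 hy.ne' hi hj)
  by_cases h : x ∈ openSegment ℝ (ℓ ⟨0, by omega⟩) y ∨ x ∈ openSegment ℝ (ℓ ⟨1, by omega⟩) y
  · have hfree (k : Fin _) (hk : 2 ≤ k.val) : x ∉ openSegment ℝ (ℓ k) y := fun hk' => by
      rcases h with h | h <;> have := congrArg Fin.val (unique h hk') <;> simp at this <;> omega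
    exact finish (i := ⟨2, by omega⟩) (j := ⟨3, by omega⟩) rfl (hfree _ le_rfl) (hfree _ (by simp))
  · exact finish rfl (not_or.1 h).1 (not_or.1 h).2

theorem card_filter_signedArea_eq_zero_add (P : Finset (ℝ × ℝ)) (a b : ℝ × ℝ) :
    #(P.filter (signedArea a b · = 0)) + #(P.filter (signedArea a b · ≠ 0)) = #P :=
  card_filter_add_card_filter_not _

theorem hasFourVisible_of_three_off (hab : a ≠ b) (hL : 4 ≤ #(P.filter (signedArea a b · = 0)))
    (hoff : 3 ≤ #(P.filter (signedArea a b · ≠ 0))) : HasFourVisible P := by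
  have hsplit : #(P.filter (signedArea a b · ≠ 0)) ≤
      #(P.filter (0 < signedArea a b ·)) + #(P.filter (0 < signedArea b a ·)) := by
    refine (card_le_card fun z hz => ?_).trans (card_union_le _ _)
    rw [mem_filter] at hz
    rw [mem_union, mem_filter, mem_filter, signedArea_swap a b, neg_pos]
    exact hz.2.lt_or_gt.elim (fun h => Or.inr ⟨hz.1, h⟩) fun h => Or.inl ⟨hz.1, h⟩
  rcases le_or_gt 2 #(P.filter (0 < signedArea a b ·)) with h | h
  · exact hasFourVisible_of_two_above hab hL h
  · refine hasFourVisible_of_two_above hab.symm ?_ (by omega)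
    rwa [filter_congr fun z _ => by rw [signedArea_swap a b, neg_eq_zero]]

end RichLine

section Blocking

variable {n : ℕ} {B : Fin n → Fin n → Fin n → Prop}

def LineClosed (B : Fin n → Fin n → Fin n → Prop) (I : Finset (Fin n)) : Prop :=
  ∀ ⦃i k j⦄, B i k j → 2 ≤ #({i, k, j} ∩ I) → {i, k, j} ⊆ I

/-- The combinatorial trace of `n` points with no four pairwise visible and at most three on a
line, enumerated so that blockers lie between: `B i k j` says that the `k`-th point lies inside the
segment from the `i`-th to the `j`-th. The three points of a blocking triple are then all the
points on their line. -/
structure IsBlocking (B : Fin n → Fin n → Fin n → Prop) : Prop where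
  lt : ∀ ⦃i k j⦄, B i k j → i < k ∧ k < j
  lineClosed : ∀ ⦃i k j⦄, B i k j → LineClosed B {i, k, j}
  exists_of_card_eq_four : ∀ Q : Finset (Fin n), #Q = 4 → ∃ i ∈ Q, ∃ j ∈ Q, ∃ k, B i k j

/-- The triples that could block two indices of `Q` without meeting a known line of `K` in two
points. -/
def candidates (K : List (Finset (Fin n))) (Q : Finset (Fin n)) :
    Finset (Fin n × Fin n × Fin n) :=
  (Q ×ˢ univ ×ˢ Q).filter fun t => t.1 < t.2.1 ∧ t.2.1 < t.2.2 ∧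
    ∀ I ∈ K, #({t.1, t.2.1, t.2.2} ∩ I) ≤ 1 ∨ {t.1, t.2.1, t.2.2} ⊆ I

namespace IsBlocking

variable {K : List (Finset (Fin n))}

theorem exists_mem_candidates (hB : IsBlocking B) (hK : ∀ I ∈ K, LineClosed B I)
    {Q : Finset (Fin n)} (hQ : #Q = 4) : ∃ t ∈ candidates K Q, B t.1 t.2.1 t.2.2 := by
  obtain ⟨i, hi, j, hj, k, h⟩ := hB.exists_of_card_eq_four Q hQ
  refine ⟨(i, k, j), ?_, h⟩
  simp only [candidates, mem_filter, mem_product, mem_univ, true_and]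
  refine ⟨⟨hi, hj⟩, (hB.lt h).1, (hB.lt h).2, fun I hI => ?_⟩
  by_contra! hc
  exact hc.2 (hK I hI h hc.1)

theorem exists_blocked (hB : IsBlocking B) (hK : ∀ I ∈ K, LineClosed B I) (Q : Finset (Fin n))
    (C : Finset (Fin n × Fin n × Fin n)) (hQ : #Q = 4 := by decide)
    (hC : candidates K Q ⊆ C := by decide) : ∃ t ∈ C, B t.1 t.2.1 t.2.2 :=
  let ⟨t, ht, h⟩ := hB.exists_mem_candidates hK hQ
  ⟨t, hC ht, h⟩

theorem false_of_candidates_eq_empty (hB : IsBlocking B) (hK : ∀ I ∈ K, LineClosed B I)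
    (Q : Finset (Fin n)) (hQ : #Q = 4 := by decide) (hC : candidates K Q = ∅ := by decide) :
    False :=
  let ⟨_, ht, _⟩ := hB.exists_mem_candidates hK hQ
  notMem_empty _ (hC ▸ ht)

theorem lineClosed_cons (hB : IsBlocking B) {i k j : Fin n} (h : B i k j)
    (hK : ∀ I ∈ K, LineClosed B I) : ∀ I ∈ ({i, k, j} : Finset (Fin n)) :: K, LineClosed B I :=
  List.forall_mem_cons.2 ⟨hB.lineClosed h, hK⟩

end IsBlocking

end Blocking

namespace IsBlocking

set_option maxRecDepth 4000

variable {B : Fin 7 → Fin 7 → Fin 7 → Prop}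

theorem false_of_blocked_012 (hB : IsBlocking B) (h012 : B 0 1 2) : False := by
  -- at each step, the quadruple `Q` is blocked by one of the listed triples
  have hK₀ := hB.lineClosed_cons h012 (K := []) (by simp)
  obtain ⟨t, ht, h⟩ := hB.exists_blocked hK₀ {0, 1, 3, 4} {(0, 3, 4), (1, 3, 4)}
  fin_cases ht
  · exact hB.false_of_candidates_eq_empty (hB.lineClosed_cons h hK₀) {1, 2, 3, 4}
  have hK₁ := hB.lineClosed_cons h hK₀
  obtain ⟨t, ht, h⟩ := hB.exists_blocked hK₁ {0, 1, 3, 5} {(0, 3, 5), (0, 4, 5)}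
  have hK₂ := hB.lineClosed_cons h hK₁
  fin_cases ht
  · obtain ⟨t, ht, h⟩ := hB.exists_blocked hK₂ {1, 2, 3, 5} {(2, 4, 5)}
    fin_cases ht
    exact hB.false_of_candidates_eq_empty (hB.lineClosed_cons h hK₂) {3, 4, 5, 6}
  · obtain ⟨t, ht, h⟩ := hB.exists_blocked hK₂ {1, 2, 3, 5} {(2, 3, 5)}
    fin_cases ht
    exact hB.false_of_candidates_eq_empty (hB.lineClosed_cons h hK₂) {3, 4, 5, 6}

theorem lineClosed_01 (hB : IsBlocking B) (h01 : ∀ j, ¬B 0 1 j) : LineClosed B {0, 1} := by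
  intro i k j h hcard
  have key : ∀ i k j : Fin 7, i < k → k < j → 2 ≤ #({i, k, j} ∩ {0, 1}) → i = 0 ∧ k = 1 := by
    decide
  obtain ⟨rfl, rfl⟩ := key i k j (hB.lt h).1 (hB.lt h).2 hcard
  exact absurd h (h01 j)

theorem blocked_023_or_123 (hB : IsBlocking B) (h01 : ∀ j, ¬B 0 1 j) : B 0 2 3 ∨ B 1 2 3 := by
  have hK₀ := List.forall_mem_cons.2 ⟨hB.lineClosed_01 h01, List.forall_mem_nil _⟩
  obtain ⟨t, ht, h⟩ := hB.exists_blocked hK₀ {0, 1, 2, 3} {(0, 2, 3), (1, 2, 3)}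
  fin_cases ht
  exacts [Or.inl h, Or.inr h]

theorem false_of_blocked_023 (hB : IsBlocking B) (h01 : ∀ j, ¬B 0 1 j) (h023 : B 0 2 3)
    (hconfig : B 1 3 4 → B 2 4 5 → B 0 4 6 → B 3 5 6 → False) : False := by
  have hK₀ := hB.lineClosed_cons h023
    (List.forall_mem_cons.2 ⟨hB.lineClosed_01 h01, List.forall_mem_nil _⟩)
  obtain ⟨t, ht, h⟩ := hB.exists_blocked hK₀ {0, 1, 2, 4} {(1, 2, 4), (1, 3, 4)}
  have hK₁ := hB.lineClosed_cons h hK₀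
  fin_cases ht
  · obtain ⟨t, ht, h⟩ := hB.exists_blocked hK₁ {0, 2, 4, 5} {(0, 4, 5)}
    fin_cases ht
    exact hB.false_of_candidates_eq_empty (hB.lineClosed_cons h hK₁) {2, 3, 4, 5}
  obtain ⟨t, ht, h245⟩ := hB.exists_blocked hK₁ {2, 3, 4, 5} {(2, 4, 5)}
  fin_cases ht
  have hK₂ := hB.lineClosed_cons h245 hK₁
  obtain ⟨t, ht, h356⟩ := hB.exists_blocked hK₂ {2, 3, 4, 6} {(3, 5, 6)}
  fin_cases ht
  have hK₃ := hB.lineClosed_cons h356 hK₂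
  obtain ⟨t, ht, h046⟩ := hB.exists_blocked hK₃ {0, 4, 5, 6} {(0, 4, 6)}
  fin_cases ht
  exact hconfig h h245 h046 h356

end IsBlocking

def Blocked {n : ℕ} (e : Fin n → ℝ × ℝ) (i k j : Fin n) : Prop :=
  i < j ∧ e k ∈ openSegment ℝ (e i) (e j)

def BlockersBetween {n : ℕ} (e : Fin n → ℝ × ℝ) : Prop :=
  ∀ i k j, e k ∈ openSegment ℝ (e i) (e j) → i < j → i < k ∧ k < j

section Enumeration

variable {n : ℕ} {P : Finset (ℝ × ℝ)} {e : Fin n → ℝ × ℝ}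

theorem collinear_of_blocked {i k j : Fin n} (h : Blocked e i k j) :
    Collinear ℝ (e '' ↑({i, k, j} : Finset (Fin n))) := by
  rw [coe_insert, coe_insert, coe_singleton, Set.image_insert_eq, Set.image_insert_eq,
    Set.image_singleton]
  exact (mem_segment_iff_wbtw.1 (openSegment_subset_segment _ _ _ h.2)).collinear

theorem lineClosed_blocked (he : Function.Injective e) (hP : Set.range e = P)
    (hsort : BlockersBetween e) (hno4 : NoFourCollinear P) {i k j : Fin n}
    (h : Blocked e i k j) : LineClosed (Blocked e) {i, k, j} := by
  classical
  intro i' k' j' h' hcard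
  set T : Finset (Fin n) := {i, k, j}
  set T' : Finset (Fin n) := {i', k', j'}
  obtain ⟨s, hs, t, ht, hst⟩ := one_lt_card.1 hcard
  rw [mem_inter] at hs ht
  have hsub (U : Finset (Fin n)) (hs : s ∈ U) (ht : t ∈ U) (w) (hw : w ∈ U) :
      ({e s, e t, e w} : Set (ℝ × ℝ)) ⊆ e '' ↑U := by
    simp only [Set.insert_subset_iff, Set.singleton_subset_iff]
    exact ⟨⟨s, hs, rfl⟩, ⟨t, ht, rfl⟩, ⟨w, hw, rfl⟩⟩
  have hcol (w) (hw : w ∈ T ∪ T') : signedArea (e s) (e t) (e w) = 0 := by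
    rw [signedArea_eq_zero_iff_collinear]
    rcases mem_union.1 hw with hw | hw
    · exact (collinear_of_blocked h).subset (hsub T hs.2 ht.2 w hw)
    · exact (collinear_of_blocked h').subset (hsub T' hs.1 ht.1 w hw)
  have hmem (i) : e i ∈ P := by rw [← Finset.mem_coe, ← hP]; exact ⟨i, rfl⟩
  have hle : #(T ∪ T') ≤ 3 := by
    rw [← card_image_of_injective _ he]
    refine (card_le_card fun z hz => ?_).trans (hno4 _ (hmem s) _ (hmem t) (he.ne hst))
    obtain ⟨w, hw, rfl⟩ := mem_image.1 hz
    exact mem_filter.2 ⟨hmem w, hcol w hw⟩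
  have hT : #T = 3 := by
    obtain ⟨hik, hkj⟩ := hsort _ _ _ h.2 h.1
    rw [card_insert_of_notMem (by simp [hik.ne, (hik.trans hkj).ne]), card_pair hkj.ne]
  have hunion : T ∪ T' = T := (eq_of_subset_of_card_le subset_union_left (by omega)).symm
  exact hunion ▸ subset_union_right

theorem isBlocking_blocked (he : Function.Injective e) (hP : Set.range e = P)
    (hsort : BlockersBetween e) (hno4 : NoFourCollinear P) (hK4 : ¬HasFourVisible P) :
    IsBlocking (Blocked e) where
  lt _ _ _ h := hsort _ _ _ h.2 h.1
  lineClosed _ _ _ := lineClosed_blocked he hP hsort hno4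
  exists_of_card_eq_four Q hQ := by
    by_contra! hcon
    refine hK4 ⟨Q.image e, fun z hz => ?_, by rw [card_image_of_injective _ he, hQ], ?_⟩
    · obtain ⟨i, -, rfl⟩ := mem_image.1 hz
      rw [← Finset.mem_coe, ← hP]; exact ⟨i, rfl⟩
    rintro p hp q hq hpq r hr hseg
    obtain ⟨i, hi, rfl⟩ := mem_image.1 hp
    obtain ⟨j, hj, rfl⟩ := mem_image.1 hq
    obtain ⟨k, rfl⟩ : r ∈ Set.range e := hP ▸ hr
    rcases lt_or_gt_of_ne (ne_of_apply_ne e hpq) with hij | hji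
    · exact hcon i hi j hj k ⟨hij, hseg⟩
    · exact hcon j hj i hi k ⟨hji, by rwa [openSegment_symm]⟩

theorem blockersBetween_of_strictMono {a b : ℝ × ℝ} (he : StrictMono (lineKey a b ∘ e)) :
    BlockersBetween e := by
  intro i k j h hij
  obtain ⟨h₁, h₂⟩ := lineKey_between h (he hij)
  exact ⟨he.lt_iff_lt.1 h₁, he.lt_iff_lt.1 h₂⟩

theorem blocked_of_collinear (hsort : BlockersBetween e) (he : Function.Injective e)
    {i k j : Fin n} (hik : i < k) (hkj : k < j)
    (h : Collinear ℝ ({e i, e k, e j} : Set (ℝ × ℝ))) : Blocked e i k j := by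
  have mem {x y z : Fin n} (h : Wbtw ℝ (e x) (e y) (e z)) (hxy : x ≠ y) (hyz : y ≠ z) :
      e y ∈ openSegment ℝ (e x) (e z) :=
    mem_openSegment_of_ne_left_right (he.ne hxy) (he.ne hyz.symm) (mem_segment_iff_wbtw.2 h)
  rcases h.wbtw_or_wbtw_or_wbtw with h | h | h
  · exact ⟨hik.trans hkj, mem h hik.ne hkj.ne⟩
  · have := mem h hkj.ne (hik.trans hkj).ne'
    rw [openSegment_symm] at this
    exact absurd (hsort i j k this hik).2 hkj.not_gt
  · have := mem h (hik.trans hkj).ne' hik.ne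
    rw [openSegment_symm] at this
    exact absurd (hsort k i j this hkj).1 hik.not_gt

end Enumeration

theorem blockersBetween_comp_swap {e : Fin 7 → ℝ × ℝ} (hsort : BlockersBetween e)
    (h01 : ∀ j, ¬Blocked e 0 1 j) : BlockersBetween (e ∘ Equiv.swap 0 1) := by
  set σ := Equiv.swap (0 : Fin 7) 1
  -- `σ` preserves the order of the indices except between `0` and `1`, which `h01` keeps apart
  have key : ∀ i k j : Fin 7, i < j → (σ i < σ k ∧ σ k < σ j ∨ σ j < σ k ∧ σ k < σ i) →
      ¬(σ k = 1 ∧ (σ i = 0 ∧ 0 < σ j ∨ σ j = 0 ∧ 0 < σ i)) → i < k ∧ k < j := by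
    decide
  intro i k j h hij
  refine key i k j hij ?_ ?_
  · rcases lt_trichotomy (σ i) (σ j) with hlt | heq | hgt
    · exact Or.inl (hsort _ _ _ h hlt)
    · exact absurd (σ.injective heq) hij.ne
    · exact Or.inr (hsort _ _ _ (by rwa [openSegment_symm]) hgt)
  · rintro ⟨hk, ⟨hi, hj⟩ | ⟨hj, hi⟩⟩
    · exact h01 (σ j) ⟨hj, by rw [← hk, ← hi]; exact h⟩
    · exact h01 (σ i) ⟨hi, by rw [← hk, ← hj, openSegment_symm]; exact h⟩

theorem false_of_config {p₁ p₂ x y z₁ z₂ z₃ : ℝ × ℝ}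
    (hnc : ¬Collinear ℝ ({p₁, p₂, x} : Set (ℝ × ℝ)))
    (h₁ : x ∈ openSegment ℝ p₁ y) (h₂ : y ∈ openSegment ℝ p₂ z₁) (h₃ : z₁ ∈ openSegment ℝ x z₂)
    (h₄ : z₁ ∈ openSegment ℝ p₁ z₃) (h₅ : z₂ ∈ openSegment ℝ y z₃) : False := by
  rw [← signedArea_eq_zero_iff_collinear] at hnc
  obtain ⟨t₁, ⟨ht₁, -⟩, e₁⟩ := signedArea_of_mem_openSegment h₁
  obtain ⟨t₂, ⟨-, ht₂⟩, e₂⟩ := signedArea_of_mem_openSegment h₂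
  obtain ⟨t₃, ⟨ht₃, ht₃'⟩, e₃⟩ := signedArea_of_mem_openSegment h₃
  obtain ⟨t₄, -, e₄⟩ := signedArea_of_mem_openSegment h₄
  obtain ⟨t₅, ⟨ht₅, ht₅'⟩, e₅⟩ := signedArea_of_mem_openSegment h₅
  -- `C = signedArea p₁ p₂` vanishes on the line `p₁ p₂`, and `D = signedArea p₁ x` on `p₁ x y`
  have C₁ := e₁ p₁ p₂; have C₃ := e₃ p₁ p₂; have C₄ := e₄ p₁ p₂; have C₅ := e₅ p₁ p₂
  have D₁ := e₁ p₁ x; have D₂ := e₂ p₁ x; have D₃ := e₃ p₁ x; have D₄ := e₄ p₁ x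
  have D₅ := e₅ p₁ x
  simp only [signedArea_left, signedArea_right, mul_zero, zero_add] at C₁ C₄ D₁ D₃ D₄
  have hDy : signedArea p₁ x y = 0 := (mul_eq_zero.1 D₁.symm).resolve_left ht₁.ne'
  have hDp₂ : signedArea p₁ x p₂ ≠ 0 := by
    rwa [show signedArea p₁ x p₂ = -signedArea p₁ p₂ x by unfold signedArea; ring, neg_ne_zero]
  have hDz₃ : signedArea p₁ x z₃ ≠ 0 := by
    intro h
    rw [h, mul_zero] at D₄
    rw [hDy, D₄, mul_zero, add_zero] at D₂
    exact hDp₂ ((mul_eq_zero.1 D₂.symm).resolve_left (by linarith))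
  have ht₄ : t₄ = t₃ * t₅ := by
    apply mul_right_cancel₀ hDz₃
    rw [← D₄, D₃, D₅, hDy]; ring
  have hCy : signedArea p₁ p₂ y * ((1 - t₃) * t₁ + t₃ * (1 - t₅)) = 0 := by
    linear_combination C₄ - C₃ - (1 - t₃) * C₁ - t₃ * C₅ + signedArea p₁ p₂ z₃ * ht₄
  have hpos : 0 < (1 - t₃) * t₁ + t₃ * (1 - t₅) := by
    have := mul_pos (sub_pos.2 ht₃') ht₁
    have := mul_pos ht₃ (sub_pos.2 ht₅')
    linarith
  rw [C₁, (mul_eq_zero.1 hCy).resolve_right hpos.ne', mul_zero] at hnc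
  exact hnc rfl

section SevenPoints

variable {P : Finset (ℝ × ℝ)}

theorem false_of_noncollinear_base {e : Fin 7 → ℝ × ℝ} (he : Function.Injective e)
    (hP : Set.range e = P) (hsort : BlockersBetween e) (hno4 : NoFourCollinear P)
    (hK4 : ¬HasFourVisible P) (hnc : ¬Collinear ℝ ({e 0, e 1, e 2} : Set (ℝ × ℝ)))
    (h01 : ∀ j, ¬Blocked e 0 1 j) (h023 : Blocked e 0 2 3) : False :=
  (isBlocking_blocked he hP hsort hno4 hK4).false_of_blocked_023 h01 h023
    fun h₂ h₃ h₄ h₅ => false_of_config hnc h023.2 h₂.2 h₃.2 h₄.2 h₅.2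

theorem false_of_bottom_pair {e : Fin 7 → ℝ × ℝ} (he : Function.Injective e)
    (hP : Set.range e = P) (hsort : BlockersBetween e) (hno4 : NoFourCollinear P)
    (hK4 : ¬HasFourVisible P) (hnc : ¬Collinear ℝ ({e 0, e 1, e 2} : Set (ℝ × ℝ))) {a b : ℝ × ℝ}
    (h₀ : signedArea a b (e 0) = 0) (h₁ : signedArea a b (e 1) = 0)
    (hpos : ∀ j, 1 < j → 0 < signedArea a b (e j)) : False := by
  have h01 (j) : ¬Blocked e 0 1 j := fun h =>
    (signedArea_pos_of_mem_openSegment h₀.ge (hpos j (hsort _ _ _ h.2 h.1).2) h.2).ne' h₁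
  rcases (isBlocking_blocked he hP hsort hno4 hK4).blocked_023_or_123 h01 with h | h
  · exact false_of_noncollinear_base he hP hsort hno4 hK4 hnc h01 h
  -- relabel so that the bottom point hidden from `e 3` by `e 2` comes first
  set σ := Equiv.swap (0 : Fin 7) 1
  have hσ : ∀ j : Fin 7, 1 < j → σ j = j := by decide
  have hσ₀ : σ 0 = 1 := rfl
  have hσ₁ : σ 1 = 0 := rfl
  have hsort' := blockersBetween_comp_swap hsort h01
  refine false_of_noncollinear_base (he.comp σ.injective)
    (by rw [EquivLike.range_comp]; exact hP) hsort' hno4 hK4 ?_ (fun j h => ?_) ?_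
  · simpa [hσ₀, hσ₁, hσ 2 (by decide), Set.insert_comm] using hnc
  · have hj := (hsort' _ _ _ h.2 h.1).2
    refine (signedArea_pos_of_mem_openSegment h₁.ge (hpos j hj) ?_).ne' h₀
    simpa [hσ₀, hσ₁, hσ j hj] using h.2
  · simpa [Blocked, hσ₀, hσ 2 (by decide), hσ 3 (by decide)] using h

theorem hasFourVisible_of_card_eq_seven (hP : #P = 7) (hno4 : NoFourCollinear P) :
    HasFourVisible P := by
  by_contra hK4
  obtain ⟨a, ha, b, hb, hab, hbot⟩ := exists_bottom_edge (P := P) (by omega)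
  obtain ⟨e, hmono, hrange⟩ :=
    exists_enum_strictMono P hP (lineKey a b) (lineKey_injective hab).injOn
  have he := hmono.injective.of_comp
  have hsort := blockersBetween_of_strictMono hmono
  by_cases hcol : Collinear ℝ ({e 0, e 1, e 2} : Set (ℝ × ℝ))
  · exact (isBlocking_blocked he hrange hsort hno4 hK4).false_of_blocked_012
      (blocked_of_collinear hsort he (by decide) (by decide) hcol)
  have hmem (z) (hz : z ∈ P) : ∃ i, e i = z := by
    rw [← Finset.mem_coe, ← hrange] at hz; exact hz
  have hbot' (i) : 0 ≤ signedArea a b (e i) :=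
    hbot _ (by rw [← Finset.mem_coe, ← hrange]; exact ⟨i, rfl⟩)
  have hmono' {i j : Fin 7} (hij : i ≤ j) : signedArea a b (e i) ≤ signedArea a b (e j) :=
    (Prod.Lex.toLex_le_toLex.1 (hmono.monotone hij)).elim le_of_lt fun h => h.1.le
  -- `a` and `b` lie on the bottom line, so the first two points of the enumeration do too
  have h₁ : signedArea a b (e 1) = 0 := by
    obtain ⟨i, rfl⟩ := hmem a ha
    obtain ⟨j, rfl⟩ := hmem b hb
    have hij : i ≠ j := fun h => hab (congrArg e h)
    refine le_antisymm ?_ (hbot' 1)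
    rcases le_or_gt 1 i with hi | hi
    · simpa using hmono' hi
    · simpa using hmono' (show 1 ≤ j by omega)
  have h₀ : signedArea a b (e 0) = 0 := le_antisymm (h₁ ▸ hmono' (by decide)) (hbot' 0)
  have h₂ : 0 < signedArea a b (e 2) := by
    refine (hbot' 2).lt_of_ne' fun h₂ => hcol (collinear_of_forall_signedArea_eq_zero hab ?_)
    simp [h₀, h₁, h₂]
  exact false_of_bottom_pair he hrange hsort hno4 hK4 hcol h₀ h₁ fun j hj =>
    h₂.trans_le (hmono' hj)

end SevenPoints

theorem exists_line_of_not_hasFourVisible {n : ℕ} (hn : 7 ≤ n) {P : Finset (ℝ × ℝ)}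
    (hP : #P = n) (hK4 : ¬HasFourVisible P) :
    ∃ a ∈ P, ∃ b ∈ P, a ≠ b ∧ #(P.filter (signedArea a b · ≠ 0)) ≤ 2 := by
  induction n, hn using Nat.le_induction generalizing P with
  | base =>
    by_contra! hoff
    refine hK4 (hasFourVisible_of_card_eq_seven hP fun a ha b hb hab => ?_)
    by_contra! hL
    exact hK4 (hasFourVisible_of_three_off hab hL (hoff a ha b hb hab))
  | succ n hn ih =>
    obtain ⟨w, hwP, hw⟩ := exists_notMem_openSegment (P := P) (card_pos.1 (by omega))
    obtain ⟨a, ha, b, hb, hab, hoff⟩ :=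
      ih (P := P.erase w) (by rw [card_erase_of_mem hwP, hP]; rfl) fun h => hK4 (h.of_erase hw)
    refine ⟨a, mem_of_mem_erase ha, b, mem_of_mem_erase hb, hab, ?_⟩
    by_contra! hoff'
    have hcount := card_filter_signedArea_eq_zero_add (P.erase w) a b
    rw [card_erase_of_mem hwP, hP] at hcount
    have := card_le_card (filter_subset_filter (signedArea a b · = 0) (erase_subset w P))
    exact hK4 (hasFourVisible_of_three_off hab (by omega) hoff')

end PointVisibility

theorem big_line_clique_four_general (ℓ : ℕ) :
    ∀ P : Finset (ℝ × ℝ), max 7 (ℓ + 2) ≤ P.card →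
      (∃ S ⊆ P, S.card = ℓ ∧ Collinear ℝ (↑S : Set (ℝ × ℝ))) ∨
      (∃ S ⊆ P, S.card = 4 ∧ PairwiseVisible P S) := by
  intro P hP
  by_cases hK4 : PointVisibility.HasFourVisible P
  · exact Or.inr hK4
  obtain ⟨a, -, b, -, hab, hoff⟩ :=
    PointVisibility.exists_line_of_not_hasFourVisible (le_of_max_le_left hP) rfl hK4
  have := PointVisibility.card_filter_signedArea_eq_zero_add P a b
  have := le_of_max_le_right hP
  obtain ⟨S, hS, hcard⟩ := Finset.exists_subset_card_eq
    (s := P.filter (PointVisibility.signedArea a b · = 0)) (n := ℓ) (by omega)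
  exact Or.inl ⟨S, hS.trans (Finset.filter_subset _ _), hcard,
    PointVisibility.collinear_of_forall_signedArea_eq_zero hab fun z hz =>
      (Finset.mem_filter.1 (hS hz)).2⟩

/-- For every `ℓ ≥ 2`, every set of at least `max {7, ℓ + 2}` points in the
plane contains `ℓ` collinear points or `4` pairwise mutually visible points. -/
theorem big_line_clique_four (ℓ : ℕ) (hl : 2 ≤ ℓ) :
    ∀ P : Finset (ℝ × ℝ), max 7 (ℓ + 2) ≤ P.card →
      (∃ S ⊆ P, S.card = ℓ ∧ Collinear ℝ (↑S : Set (ℝ × ℝ))) ∨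
      (∃ S ⊆ P, S.card = 4 ∧ PairwiseVisible P S) :=
  big_line_clique_four_general ℓ
end

section
/- Let G be a 2-connected planar graph admitting a strong bar visibility representation. Then there is no pair of non-adjacent vertices u, v of G such that removing u and v separates G into four or more connected components. -/
/-!
Let `u`, `v` be non-adjacent. By 2-connectivity every component of `G - {u, v}` contains
neighbours of both `u` and `v`; we show there are at most three such components.

Consecutive bars along a vertical line see each other, so all bars crossing a fixed vertical line
without a bar of `u` or `v` between them lie in one component. If the shadows of `u` and `v` on
the `x`-axis are disjoint, every such component crosses a vertical line separating them, so there
is only one. Otherwise, as `u` and `v` do not see each other, the strip between them over their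
common shadow is filled by bars forming a single component, and every other component has to
cross one of two vertical half-lines at the ends of the common shadow: otherwise being left or
right of (or inside) these half-lines is preserved along its edges, while the neighbours of `u`
and those of `v` lie on different sides. Up to reflections there are two such configurations,
`u` below one end of `v` and `v` above the middle of `u`.
-/

/-- `(y, a, b)` is a strong bar visibility representation of the graph `G`:
vertex `v` is the horizontal bar `[a v, b v] × {y v}`, the bars are pairwise
disjoint, and two distinct vertices are adjacent iff some vertical segment
(of possibly zero width) joins their bars without meeting any other bar
(touching the endpoint of an intermediate bar counts as obstruction). -/
def IsStrongBarVisibilityRep {V : Type*} (G : SimpleGraph V)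
    (y a b : V → ℝ) : Prop :=
  (∀ v, a v ≤ b v) ∧
  (∀ u v : V, u ≠ v →
    ∀ x : ℝ, a u ≤ x → x ≤ b u → a v ≤ x → x ≤ b v → y u ≠ y v) ∧
  (∀ u v : V, u ≠ v →
    (G.Adj u v ↔ ∃ x : ℝ, a u ≤ x ∧ x ≤ b u ∧ a v ≤ x ∧ x ≤ b v ∧
      ∀ w : V, w ≠ u → w ≠ v →
        ¬ (a w ≤ x ∧ x ≤ b w ∧ min (y u) (y v) < y w ∧ y w < max (y u) (y v))))

/-- `H` is a minor of `G`: there are nonempty, pairwise disjoint connected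
branch sets in `G`, one for each vertex of `H`, with an edge of `G` between the
branch sets of any two adjacent vertices of `H`. -/
def HasMinor {V W : Type*} (G : SimpleGraph V) (H : SimpleGraph W) : Prop :=
  ∃ f : W → Set V, (∀ w, (f w).Nonempty) ∧ (∀ w, (G.induce (f w)).Connected) ∧
    (∀ w w', w ≠ w' → Disjoint (f w) (f w')) ∧
    (∀ w w', H.Adj w w' → ∃ p ∈ f w, ∃ q ∈ f w', G.Adj p q)

/-- Planarity in the sense of Wagner's theorem: `G` has neither a `K₅` minor
nor a `K₃,₃` minor. -/
def IsPlanar {V : Type*} (G : SimpleGraph V) : Prop :=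
  ¬ HasMinor G (⊤ : SimpleGraph (Fin 5)) ∧
  ¬ HasMinor G (completeBipartiteGraph (Fin 3) (Fin 3))

/-- `G` is `2`-connected: it has at least three vertices and remains connected
after deleting any single vertex. -/
def TwoConnected {V : Type*} [Fintype V] (G : SimpleGraph V) : Prop :=
  3 ≤ Fintype.card V ∧
  ∀ v : V, (((⊤ : G.Subgraph).deleteVerts {v}).coe).Connected

open Set

section Intervals

variable {α : Type*} [LinearOrder α] {x c d l r p q : α}

lemma Set.uIoo_subset_uIoo_left_of_mem (h : q ∈ uIoo p r) : uIoo p q ⊆ uIoo p r := by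
  rcases le_total p r with hpr | hrp
  · rw [uIoo_of_le hpr] at h ⊢
    rw [uIoo_of_le h.1.le]
    exact Ioo_subset_Ioo_right h.2.le
  · rw [uIoo_of_ge hrp] at h ⊢
    rw [uIoo_of_ge h.2.le]
    exact Ioo_subset_Ioo_left h.1.le

lemma Set.mem_uIoo_of_mem_uIcc (h : x ∈ uIcc p q) (hp : x ≠ p) (hq : x ≠ q) :
    x ∈ uIoo p q := by
  rcases le_total p q with hpq | hqp
  · rw [uIcc_of_le hpq] at h
    rw [uIoo_of_le hpq]
    exact ⟨lt_of_le_of_ne h.1 hp.symm, lt_of_le_of_ne h.2 hq⟩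
  · rw [uIcc_of_ge hqp] at h
    rw [uIoo_of_ge hqp]
    exact ⟨lt_of_le_of_ne h.1 hq.symm, lt_of_le_of_ne h.2 hp⟩

lemma Set.right_lt_iff_of_mem_Icc (hx : x ∈ Icc l r) (hc : c ∉ Icc l r) : r < c ↔ x < c :=
  ⟨hx.2.trans_lt, fun hxc => not_le.mp fun hcr => hc ⟨hx.1.trans hxc.le, hcr⟩⟩

lemma Set.Icc_subset_Ioo_of_notMem (hx : x ∈ Icc l r) (hxcd : x ∈ Icc c d) (hc : c ∉ Icc l r)
    (hd : d ∉ Icc l r) : Icc l r ⊆ Ioo c d := fun _ ht =>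
  ⟨(not_le.mp fun hlc => hc ⟨hlc, hxcd.1.trans hx.2⟩).trans_le ht.1,
    ht.2.trans_lt (not_le.mp fun hdr => hd ⟨hx.1.trans hxcd.2, hdr⟩)⟩

end Intervals

lemma Set.ncard_le_three_of_subset_union {α : Type*} [Finite α] {T A B C : Set α}
    (hT : T ⊆ A ∪ B ∪ C) (hA : A.Subsingleton) (hB : B.Subsingleton) (hC : C.Subsingleton) :
    T.ncard ≤ 3 := by
  rw [← ncard_le_one_iff_subsingleton] at hA hB hC
  calc T.ncard ≤ (A ∪ B ∪ C).ncard := ncard_le_ncard hT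
    _ ≤ A.ncard + B.ncard + C.ncard :=
      (ncard_union_le _ _).trans (Nat.add_le_add_right (ncard_union_le _ _) _)
    _ ≤ 3 := by omega

lemma IsPreconnected.subsingleton_image_of_closed_cover {X ι β : Type*} [TopologicalSpace X]
    [Finite ι] {S : Set X} (hS : IsPreconnected S) {T : Set ι} {I : ι → Set X}
    (hI : ∀ i, IsClosed (I i)) (φ : ι → β) (hcover : S ⊆ ⋃ i ∈ T, I i)
    (hfiber : ∀ x ∈ S, (φ '' {i | i ∈ T ∧ x ∈ I i}).Subsingleton) :
    (φ '' {i | i ∈ T ∧ (I i ∩ S).Nonempty}).Subsingleton := by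
  rintro _ ⟨i, ⟨hiT, x, hxi, hxS⟩, rfl⟩ _ ⟨j, ⟨hjT, x', hx'j, hx'S⟩, rfl⟩
  have hclosed : ∀ P : ι → Prop, IsClosed (⋃ k ∈ {k | k ∈ T ∧ P k}, I k) := fun P =>
    (toFinite _).isClosed_biUnion fun k _ => hI k
  have hsame : ∀ x ∈ S, ∀ k ∈ T, ∀ k' ∈ T, x ∈ I k → x ∈ I k' → φ k = φ k' :=
    fun x hx k hk k' hk' hxk hxk' =>
      hfiber x hx ⟨k, ⟨hk, hxk⟩, rfl⟩ ⟨k', ⟨hk', hxk'⟩, rfl⟩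
  -- `S` is covered by the disjoint closed sets where `φ` takes, resp. avoids, the value `φ i`
  have hsplit := isPreconnected_iff_subset_of_disjoint_closed.mp hS _ _
    (hclosed (φ · = φ i)) (hclosed (φ · ≠ φ i))
    (fun z hz => by
      obtain ⟨k, hk, hzk⟩ := mem_iUnion₂.mp (hcover hz)
      by_cases hki : φ k = φ i
      exacts [Or.inl (mem_biUnion ⟨hk, hki⟩ hzk), Or.inr (mem_biUnion ⟨hk, hki⟩ hzk)])
    (eq_empty_of_forall_notMem fun z ⟨hz, hzA, hzB⟩ => by
      obtain ⟨k, ⟨hk, hki⟩, hzk⟩ := mem_iUnion₂.mp hzA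
      obtain ⟨k', ⟨hk', hk'i⟩, hzk'⟩ := mem_iUnion₂.mp hzB
      exact hk'i ((hsame z hz k' hk' k hk hzk' hzk).trans hki))
  rcases hsplit with hA | hB
  · obtain ⟨k, ⟨hk, hki⟩, hx'k⟩ := mem_iUnion₂.mp (hA hx'S)
    exact hki.symm.trans (hsame x' hx'S k hk j hjT hx'k hx'j)
  · obtain ⟨k, ⟨hk, hki⟩, hxk⟩ := mem_iUnion₂.mp (hB hxS)
    exact absurd (hsame x hxS k hk i hiT hxk hxi) hki

namespace SimpleGraph

variable {V : Type*} {G : SimpleGraph V}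

lemma Reachable.imp_of_adj {H : SimpleGraph V} {P : V → Prop} {c p q : V}
    (hP : ∀ r r', H.Reachable c r → H.Adj r r' → P r → P r') (hcp : H.Reachable c p)
    (hpq : H.Reachable p q) (hp : P p) : P q := by
  obtain ⟨W⟩ := hpq
  induction W with
  | nil => exact hp
  | cons hadj _ ih => exact ih (hcp.trans hadj.reachable) (hP _ _ hcp hadj hp)

lemma Subgraph.reachable_coe_iff {G' : G.Subgraph} {p q : V} (hp : p ∈ G'.verts)
    (hq : q ∈ G'.verts) :
    G'.coe.Reachable ⟨p, hp⟩ ⟨q, hq⟩ ↔ G'.spanningCoe.Reachable p q := by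
  refine ⟨fun h => h.map ⟨Subtype.val, id⟩, ?_⟩
  rintro ⟨W⟩
  induction W with
  | nil => rfl
  | cons hadj _ ih =>
    have hr := G'.edge_vert hadj.symm
    exact (Adj.reachable (show G'.coe.Adj ⟨_, hp⟩ ⟨_, hr⟩ from hadj)).trans (ih hr hq)

/-- `G - s` as a graph on all of `V`: the vertices of `s` are kept, isolated. -/
def isolateVerts (G : SimpleGraph V) (s : Set V) : SimpleGraph V :=
  ((⊤ : G.Subgraph).deleteVerts s).spanningCoe

@[simp]
lemma isolateVerts_adj {s : Set V} {p q : V} :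
    (G.isolateVerts s).Adj p q ↔ G.Adj p q ∧ p ∉ s ∧ q ∉ s := by
  simp only [isolateVerts, Subgraph.spanningCoe_adj, Subgraph.deleteVerts_adj,
    Subgraph.verts_top, mem_univ, true_and, Subgraph.top_adj]
  tauto

lemma notMem_of_reachable_isolateVerts {s : Set V} {c r : V}
    (hcr : (G.isolateVerts s).Reachable c r) (hc : c ∉ s) : r ∉ s := by
  obtain ⟨W⟩ := hcr
  induction W with
  | nil => exact hc
  | cons hadj _ ih => exact ih (isolateVerts_adj.mp hadj).2.2

lemma exists_adj_of_reachable_isolateVerts {s : Set V} {c v : V}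
    (hcv : (G.isolateVerts s).Reachable c v) (hne : c ≠ v) :
    ∃ z, (G.isolateVerts (insert v s)).Reachable c z ∧ G.Adj z v := by
  obtain ⟨W⟩ := hcv
  induction W with
  | nil => exact absurd rfl hne
  | @cons p q v hadj W ih =>
    obtain ⟨hpq, hps, hqs⟩ := isolateVerts_adj.mp hadj
    by_cases hqv : q = v
    · exact ⟨p, .rfl, hqv ▸ hpq⟩
    obtain ⟨z, hqz, hzv⟩ := ih hqv
    have hpq' : (G.isolateVerts (insert v s)).Adj p q :=
      isolateVerts_adj.mpr ⟨hpq, by simp [hne, hps], by simp [hqv, hqs]⟩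
    exact ⟨z, hpq'.reachable.trans hqz, hzv⟩

def attachedComponents (G : SimpleGraph V) (s : Set V) :
    Set (G.isolateVerts s).ConnectedComponent :=
  (G.isolateVerts s).connectedComponentMk ''
    {c | c ∉ s ∧ ∀ w ∈ s, ∃ z, (G.isolateVerts s).Reachable c z ∧ G.Adj z w}

/-- A path from `c` to `u` in `G - v` ends with a neighbour of `u` reached within `G - {u, v}`, so
every component of `G - {u, v}` is attached. -/
lemma natCard_le_ncard_attachedComponents [Finite V] {u v : V} (hne : u ≠ v)
    (hu : ((⊤ : G.Subgraph).deleteVerts {u}).coe.Connected)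
    (hv : ((⊤ : G.Subgraph).deleteVerts {v}).coe.Connected) :
    Nat.card ((⊤ : G.Subgraph).deleteVerts {u, v}).coe.ConnectedComponent ≤
      (G.attachedComponents {u, v}).ncard := by
  let φ := ConnectedComponent.map
    (⟨Subtype.val, id⟩ : ((⊤ : G.Subgraph).deleteVerts {u, v}).coe →g G.isolateVerts {u, v})
  have hφ : Function.Injective φ := by
    intro C D hCD
    induction C using ConnectedComponent.ind
    induction D using ConnectedComponent.ind
    simp only [φ, ConnectedComponent.map_mk, ConnectedComponent.eq] at hCD ⊢
    exact (Subgraph.reachable_coe_iff _ _).mpr hCD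
  have hrange : range φ ⊆ G.attachedComponents {u, v} := by
    rintro _ ⟨C, rfl⟩
    induction C using ConnectedComponent.ind with | h c => ?_
    obtain ⟨c, hc⟩ := c
    have hcuv : c ∉ ({u, v} : Set V) := hc.2
    simp only [mem_insert_iff, mem_singleton_iff, not_or] at hcuv
    refine ⟨c, ⟨hc.2, ?_⟩, rfl⟩
    rintro w (rfl | rfl)
    · exact exists_adj_of_reachable_isolateVerts ((Subgraph.reachable_coe_iff (by simp [hcuv.2])
        (by simp [hne])).mp (hv.preconnected _ _)) hcuv.1
    · rw [pair_comm]
      exact exists_adj_of_reachable_isolateVerts ((Subgraph.reachable_coe_iff (by simp [hcuv.1])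
        (by simp [hne.symm])).mp (hu.preconnected _ _)) hcuv.2
  rw [← ncard_range_of_injective hφ]
  exact ncard_le_ncard hrange

lemma attachedComponents_subset_image {u v : V} {bad : Set V} {P : V → Prop}
    (hP : ∀ r r', r ∉ bad → r' ∉ bad → (G.isolateVerts {u, v}).Adj r r' → P r → P r')
    (hu : ∀ z, z ≠ v → z ∉ bad → G.Adj z u → P z)
    (hv : ∀ w, w ≠ u → w ∉ bad → G.Adj w v → ¬ P w) :
    G.attachedComponents {u, v} ⊆ (G.isolateVerts {u, v}).connectedComponentMk '' bad := by
  rintro _ ⟨c, ⟨hcs, hatt⟩, rfl⟩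
  by_contra hno
  have hgood : ∀ r, (G.isolateVerts {u, v}).Reachable c r → r ∉ bad := fun r hcr hr =>
    hno ⟨r, hr, ConnectedComponent.eq.mpr hcr.symm⟩
  obtain ⟨z, hcz, hzu⟩ := hatt u (by simp)
  obtain ⟨w, hcw, hwv⟩ := hatt v (by simp)
  have hzv : z ≠ v := fun hzv => notMem_of_reachable_isolateVerts hcz hcs (by simp [hzv])
  have hwu : w ≠ u := fun hwu => notMem_of_reachable_isolateVerts hcw hcs (by simp [hwu])
  refine hv w hwu (hgood w hcw) hwv (hcz.imp_of_adj ?_ (hcz.symm.trans hcw)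
    (hu z hzv (hgood z hcz) hzu))
  exact fun r r' hcr hrr' => hP r r' (hgood r hcr) (hgood r' (hcr.trans hrr'.reachable)) hrr'

end SimpleGraph

open SimpleGraph

def columnVerts {V : Type*} (y a b : V → ℝ) (J : Set ℝ) (x : ℝ) : Set V :=
  {r | y r ∈ J ∧ x ∈ Icc (a r) (b r)}

def stripVerts {V : Type*} (y a b : V → ℝ) (u v : V) : Set V :=
  {r | y r ∈ Ioo (y u) (y v) ∧
    (Icc (a r) (b r) ∩ (Icc (a u) (b u) ∩ Icc (a v) (b v))).Nonempty}

namespace IsStrongBarVisibilityRep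

variable {V : Type*} {G : SimpleGraph V} {y a b : V → ℝ} {u v p q : V} {x : ℝ}

lemma y_ne (h : IsStrongBarVisibilityRep G y a b) (hpq : p ≠ q) (hp : x ∈ Icc (a p) (b p))
    (hq : x ∈ Icc (a q) (b q)) : y p ≠ y q :=
  h.2.1 p q hpq x hp.1 hp.2 hq.1 hq.2

lemma adj_iff (h : IsStrongBarVisibilityRep G y a b) (hpq : p ≠ q) :
    G.Adj p q ↔ ∃ x ∈ Icc (a p) (b p), x ∈ Icc (a q) (b q) ∧
      ∀ w, x ∈ Icc (a w) (b w) → y w ∉ uIoo (y p) (y q) := by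
  rw [h.2.2 p q hpq]
  constructor
  · rintro ⟨x, h1, h2, h3, h4, hw⟩
    refine ⟨x, ⟨h1, h2⟩, ⟨h3, h4⟩, fun w hxw hyw => ?_⟩
    have hwp : w ≠ p := by rintro rfl; exact left_notMem_uIoo hyw
    have hwq : w ≠ q := by rintro rfl; exact right_notMem_uIoo hyw
    exact hw w hwp hwq ⟨hxw.1, hxw.2, hyw⟩
  · rintro ⟨x, ⟨h1, h2⟩, ⟨h3, h4⟩, hw⟩
    exact ⟨x, h1, h2, h3, h4, fun w _ _ ⟨h5, h6, hyw⟩ => hw w ⟨h5, h6⟩ hyw⟩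

lemma exists_column_of_adj (h : IsStrongBarVisibilityRep G y a b) (hpq : G.Adj p q) :
    ∃ x ∈ Icc (a p) (b p), x ∈ Icc (a q) (b q) ∧
      ∀ w, w ≠ p → w ≠ q → y w ∈ uIcc (y p) (y q) → x ∉ Icc (a w) (b w) := by
  obtain ⟨x, hp, hq, hw⟩ := (h.adj_iff hpq.ne).mp hpq
  refine ⟨x, hp, hq, fun w hwp hwq hyw hxw => hw w hxw (mem_uIoo_of_mem_uIcc hyw ?_ ?_)⟩
  exacts [h.y_ne hwp hxw hp, h.y_ne hwq hxw hq]

lemma neg_x (h : IsStrongBarVisibilityRep G y a b) :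
    IsStrongBarVisibilityRep G y (fun w => -b w) (fun w => -a w) := by
  obtain ⟨hab, hdisj, hadj⟩ := h
  refine ⟨fun w => neg_le_neg (hab w), fun p q hpq x h1 h2 h3 h4 =>
    hdisj p q hpq (-x) (by linarith) (by linarith) (by linarith) (by linarith),
    fun p q hpq => (hadj p q hpq).trans ⟨?_, ?_⟩⟩ <;>
  · rintro ⟨x, h1, h2, h3, h4, hw⟩
    exact ⟨-x, by linarith, by linarith, by linarith, by linarith,
      fun w hwp hwq ⟨h5, h6, h7⟩ => hw w hwp hwq ⟨by linarith, by linarith, h7⟩⟩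

lemma neg_y (h : IsStrongBarVisibilityRep G y a b) :
    IsStrongBarVisibilityRep G (fun w => -y w) a b := by
  obtain ⟨hab, hdisj, hadj⟩ := h
  refine ⟨hab, fun p q hpq x h1 h2 h3 h4 => neg_injective.ne (hdisj p q hpq x h1 h2 h3 h4),
    fun p q hpq => (hadj p q hpq).trans ?_⟩
  simp only [min_neg_neg, max_neg_neg, neg_lt_neg_iff, and_comm (a := max _ _ > _)]

section Finite

variable [Finite V]

/-- Consecutive bars along a vertical line see each other. -/
lemma reachable_of_mem_columnVerts (h : IsStrongBarVisibilityRep G y a b) {s : Set V}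
    {J : Set ℝ} [J.OrdConnected] (hs : ∀ w ∈ s, y w ∈ J → x ∉ Icc (a w) (b w))
    (hp : p ∈ columnVerts y a b J x) (hq : q ∈ columnVerts y a b J x) :
    (G.isolateVerts s).Reachable p q := by
  set B : V → V → Set V := fun p q => {w | x ∈ Icc (a w) (b w) ∧ y w ∈ uIoo (y p) (y q)}
  induction hn : (B p q).ncard using Nat.strong_induction_on generalizing p q with
  | _ n ih =>
  have hps : p ∉ s := fun hps => hs p hps hp.1 hp.2
  have hqs : q ∉ s := fun hqs => hs q hqs hq.1 hq.2
  by_cases hpq : p = q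
  · rw [hpq]
  rcases (B p q).eq_empty_or_nonempty with hB | ⟨w, hwx, hwy⟩
  · refine Adj.reachable (isolateVerts_adj.mpr ⟨(h.adj_iff hpq).mpr ?_, hps, hqs⟩)
    exact ⟨x, hp.2, hq.2, fun w hxw hyw => hB.subset ⟨hxw, hyw⟩⟩
  have hw : w ∈ columnVerts y a b J x :=
    ⟨OrdConnected.uIcc_subset ‹_› hp.1 hq.1 (Ioo_subset_Icc_self hwy), hwx⟩
  have hlt : ∀ p' q', uIoo (y p') (y q') ⊆ uIoo (y p) (y q) → y w ∉ uIoo (y p') (y q') →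
      (B p' q').ncard < n := fun p' q' hsub hwn => by
    have hB : B p' q' ⊆ B p q := fun r hr => ⟨hr.1, hsub hr.2⟩
    rw [← hn]
    exact ncard_lt_ncard ((ssubset_iff_of_subset hB).mpr
      ⟨w, ⟨hwx, hwy⟩, fun hw' => hwn hw'.2⟩)
  have hwq : uIoo (y w) (y q) ⊆ uIoo (y p) (y q) := by
    rw [uIoo_comm (y w), uIoo_comm (y p)]
    exact uIoo_subset_uIoo_left_of_mem (uIoo_comm (y p) (y q) ▸ hwy)
  exact (ih _ (hlt p w (uIoo_subset_uIoo_left_of_mem hwy) right_notMem_uIoo) hp hw rfl).trans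
    (ih _ (hlt w q hwq left_notMem_uIoo) hw hq rfl)

lemma subsingleton_image_columnVerts (h : IsStrongBarVisibilityRep G y a b) {s : Set V}
    {J : Set ℝ} [J.OrdConnected] (hs : ∀ w ∈ s, y w ∈ J → x ∉ Icc (a w) (b w)) :
    ((G.isolateVerts s).connectedComponentMk '' columnVerts y a b J x).Subsingleton := by
  rintro _ ⟨p, hp, rfl⟩ _ ⟨q, hq, rfl⟩
  exact ConnectedComponent.eq.mpr (h.reachable_of_mem_columnVerts hs hp hq)

/-- As `u` and `v` do not see each other, every vertical line through both bars meets a bar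
between them; the connectedness of the common shadow does the rest. -/
lemma subsingleton_image_stripVerts (h : IsStrongBarVisibilityRep G y a b)
    (hnadj : ¬ G.Adj u v) (hy : y u < y v) :
    ((G.isolateVerts {u, v}).connectedComponentMk '' stripVerts y a b u v).Subsingleton := by
  have hS : IsPreconnected (Icc (a u) (b u) ∩ Icc (a v) (b v)) := by
    rw [Icc_inter_Icc]
    exact isPreconnected_Icc
  refine hS.subsingleton_image_of_closed_cover (T := y ⁻¹' Ioo (y u) (y v))
    (fun _ => isClosed_Icc) _ (fun x hx => ?_) fun x _ =>
      h.subsingleton_image_columnVerts (x := x) (J := Ioo (y u) (y v)) ?_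
  · by_contra hno
    refine hnadj ((h.adj_iff (ne_of_apply_ne y hy.ne)).mpr
      ⟨x, hx.1, hx.2, fun w hxw hyw => hno ?_⟩)
    rw [uIoo_of_lt hy] at hyw
    exact mem_biUnion hyw hxw
  · rintro w (rfl | rfl) hw
    exacts [(lt_irrefl _ hw.1).elim, (lt_irrefl _ hw.2).elim]

/-- Every attached component crosses a vertical line separating the two bars. -/
lemma attachedComponents_subsingleton_of_lt (h : IsStrongBarVisibilityRep G y a b)
    (huv : b u < a v) : (G.attachedComponents {u, v}).Subsingleton := by
  obtain ⟨x₀, hux₀, hx₀v⟩ := exists_between huv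
  have hx₀ : ∀ w ∈ ({u, v} : Set V), y w ∈ univ → x₀ ∉ Icc (a w) (b w) := by
    rintro w (rfl | rfl) - hx
    exacts [by linarith [hx.2], by linarith [hx.1]]
  refine (h.subsingleton_image_columnVerts hx₀).anti
    (attachedComponents_subset_image (P := fun r => b r < x₀) ?_ ?_ ?_)
  · intro r r' hr hr' hrr' hP
    obtain ⟨x, hxr, hxr', -⟩ := h.exists_column_of_adj (isolateVerts_adj.mp hrr').1
    exact (right_lt_iff_of_mem_Icc hxr' (hr' ⟨trivial, ·⟩)).mpr
      ((right_lt_iff_of_mem_Icc hxr (hr ⟨trivial, ·⟩)).mp hP)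
  · intro z _ hz hzu
    obtain ⟨ξ, hξz, hξu, -⟩ := h.exists_column_of_adj hzu
    exact (right_lt_iff_of_mem_Icc hξz (hz ⟨trivial, ·⟩)).mpr (by linarith [hξu.2])
  · intro w _ hw hwv hP
    obtain ⟨β, hβw, hβv, -⟩ := h.exists_column_of_adj hwv
    linarith [hβv.1, (right_lt_iff_of_mem_Icc hβw (hw ⟨trivial, ·⟩)).mp hP]

end Finite

lemma ite_notMem_Icc_of_crossing (h : IsStrongBarVisibilityRep G y a b) (ha : a u ≤ a v)
    (hav : a v ≤ b u) (hb : b u ≤ b v) {r : V} (hru : r ≠ u) (hrv : r ≠ v)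
    (hr : r ∉ stripVerts y a b u v ∪ columnVerts y a b (Ioi (y v)) (a v) ∪
      columnVerts y a b (Iio (y u)) (b u)) :
    (if y r < y u then b u else a v) ∉ Icc (a r) (b r) := by
  intro hcr
  simp only [mem_union, not_or] at hr
  by_cases hyr : y r < y u
  · rw [if_pos hyr] at hcr
    exact hr.2 ⟨hyr, hcr⟩
  rw [if_neg hyr] at hcr
  have hvu : a v ∈ Icc (a u) (b u) := ⟨ha, hav⟩
  have hvv : a v ∈ Icc (a v) (b v) := ⟨le_rfl, hav.trans hb⟩
  rcases lt_trichotomy (y r) (y v) with hrv' | hrv' | hrv'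
  · have hyur := (not_lt.mp hyr).lt_of_ne (h.y_ne hru hcr hvu).symm
    exact hr.1.1 ⟨⟨hyur, hrv'⟩, a v, hcr, hvu, hvv⟩
  · exact h.y_ne hrv hcr hvv hrv'
  · exact hr.1.2 ⟨hrv', hcr⟩

/-- `u` below the left part of `v`: a component avoiding the strip and the line `x = a v` above
`v` and the line `x = b u` below `u` lies entirely to the left of these lines (then it cannot
reach `v`) or entirely to the right (then it cannot reach `u`). -/
lemma attachedComponents_subset_of_crossing (h : IsStrongBarVisibilityRep G y a b)
    (hy : y u < y v) (ha : a u ≤ a v) (hav : a v ≤ b u) (hb : b u ≤ b v) :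
    G.attachedComponents {u, v} ⊆ (G.isolateVerts {u, v}).connectedComponentMk ''
      (stripVerts y a b u v ∪ columnVerts y a b (Ioi (y v)) (a v) ∪
        columnVerts y a b (Iio (y u)) (b u)) := by
  refine attachedComponents_subset_image
    (P := fun r => b r < if y r < y u then b u else a v) ?_ ?_ ?_
  · intro r r' hr hr' hrr' hP
    obtain ⟨hrr', hruv, hr'uv⟩ := isolateVerts_adj.mp hrr'
    simp only [mem_insert_iff, mem_singleton_iff, not_or] at hruv hr'uv
    obtain ⟨x, hxr, hxr', hblock⟩ := h.exists_column_of_adj hrr'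
    rw [right_lt_iff_of_mem_Icc hxr (h.ite_notMem_Icc_of_crossing ha hav hb hruv.1 hruv.2 hr)]
      at hP
    rw [right_lt_iff_of_mem_Icc hxr'
      (h.ite_notMem_Icc_of_crossing ha hav hb hr'uv.1 hr'uv.2 hr')]
    by_cases hyr : y r < y u <;> by_cases hyr' : y r' < y u <;>
      simp only [hyr, hyr', if_true, if_false] at hP ⊢
    · exact hP
    · -- the line of sight crosses the level of `u`, so it passes beside `u`
      have hxu := hblock u (Ne.symm hruv.1) (Ne.symm hr'uv.1)
        (mem_uIcc.mpr (Or.inl ⟨hyr.le, not_lt.mp hyr'⟩))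
      exact (not_le.mp fun hux => hxu ⟨hux, hP.le⟩).trans_le ha
    · exact hP.trans_le hav
    · exact hP
  · intro z hzv hz hzu
    obtain ⟨ξ, hξz, hξu, hblock⟩ := h.exists_column_of_adj hzu
    have hcut := h.ite_notMem_Icc_of_crossing ha hav hb hzu.ne hzv hz
    rw [right_lt_iff_of_mem_Icc hξz hcut]
    by_cases hyz : y z < y u
    · rw [if_pos hyz] at hcut ⊢
      exact hξu.2.lt_of_ne fun hξ => hcut (hξ ▸ hξz)
    rw [if_neg hyz]
    by_contra hvξ
    have hξv : ξ ∈ Icc (a v) (b v) := ⟨not_lt.mp hvξ, hξu.2.trans hb⟩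
    by_cases hyzv : y z < y v
    · have hyuz := (not_lt.mp hyz).lt_of_ne (h.y_ne hzu.ne hξz hξu).symm
      exact hz (Or.inl (Or.inl ⟨⟨hyuz, hyzv⟩, ξ, hξz, hξu, hξv⟩))
    · exact hblock v (Ne.symm hzv) (ne_of_apply_ne y hy.ne')
        (mem_uIcc.mpr (Or.inr ⟨hy.le, not_lt.mp hyzv⟩)) hξv
  · intro w hwu hw hwv hP
    obtain ⟨β, hβw, hβv, hblock⟩ := h.exists_column_of_adj hwv
    rw [right_lt_iff_of_mem_Icc hβw (h.ite_notMem_Icc_of_crossing ha hav hb hwu hwv.ne hw)] at hP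
    by_cases hyw : y w < y u
    · rw [if_pos hyw] at hP
      exact hblock u (Ne.symm hwu) (ne_of_apply_ne y hy.ne)
        (mem_uIcc.mpr (Or.inl ⟨hyw.le, hy.le⟩)) ⟨ha.trans hβv.1, hP.le⟩
    · rw [if_neg hyw] at hP
      exact not_le.mpr hP hβv.1

/-- `v` above the middle of `u`: a component avoiding the strip and the two lines `x = a v` and
`x = b v` above `v` either lies above `v` between these lines (then it cannot reach `u`) or
nowhere there (then it cannot reach `v`). -/
lemma attachedComponents_subset_of_nested (h : IsStrongBarVisibilityRep G y a b)
    (hy : y u < y v) (ha : a u ≤ a v) (hb : b v ≤ b u) :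
    G.attachedComponents {u, v} ⊆ (G.isolateVerts {u, v}).connectedComponentMk ''
      (stripVerts y a b u v ∪ columnVerts y a b (Ioi (y v)) (a v) ∪
        columnVerts y a b (Ioi (y v)) (b v)) := by
  refine attachedComponents_subset_image
    (P := fun r => ¬ (y v < y r ∧ Icc (a r) (b r) ⊆ Ioo (a v) (b v))) ?_ ?_ ?_
  · rintro r' r hr _ hrr' hP ⟨hyr, hrv⟩
    refine hP ?_
    obtain ⟨hrr', hruv, hr'uv⟩ := isolateVerts_adj.mp hrr'.symm
    simp only [mem_insert_iff, mem_singleton_iff, not_or] at hruv hr'uv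
    obtain ⟨x, hxr, hxr', hblock⟩ := h.exists_column_of_adj hrr'
    have hxv := Ioo_subset_Icc_self (hrv hxr)
    have hyr' : y v < y r' := not_le.mp fun hyr' =>
      hblock v (Ne.symm hruv.2) (Ne.symm hr'uv.2) (mem_uIcc.mpr (Or.inr ⟨hyr', hyr.le⟩)) hxv
    exact ⟨hyr', Icc_subset_Ioo_of_notMem hxr' hxv (fun hv => hr (Or.inl (Or.inr ⟨hyr', hv⟩)))
      (fun hv => hr (Or.inr ⟨hyr', hv⟩))⟩
  · rintro z hzv - hzu ⟨hyz, hzv'⟩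
    obtain ⟨ξ, hξz, -, hblock⟩ := h.exists_column_of_adj hzu
    exact hblock v (Ne.symm hzv) (ne_of_apply_ne y hy.ne')
      (mem_uIcc.mpr (Or.inr ⟨hy.le, hyz.le⟩)) (Ioo_subset_Icc_self (hzv' hξz))
  · intro w hwu hw hwv hP
    obtain ⟨β, hβw, hβv, hblock⟩ := h.exists_column_of_adj hwv
    have hβu : β ∈ Icc (a u) (b u) := ⟨ha.trans hβv.1, hβv.2.trans hb⟩
    have hyw : y v < y w := by
      rcases lt_trichotomy (y w) (y v) with hywv | hywv | hywv
      · by_cases hyuw : y u < y w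
        · exact absurd (Or.inl (Or.inl ⟨⟨hyuw, hywv⟩, β, hβw, hβu, hβv⟩)) hw
        · exact absurd hβu (hblock u (Ne.symm hwu) (ne_of_apply_ne y hy.ne)
            (mem_uIcc.mpr (Or.inl ⟨not_lt.mp hyuw, hy.le⟩)))
      · exact absurd hywv (h.y_ne hwv.ne hβw hβv)
      · exact hywv
    exact hP ⟨hyw, Icc_subset_Ioo_of_notMem hβw hβv
      (fun hv => hw (Or.inl (Or.inr ⟨hyw, hv⟩))) (fun hv => hw (Or.inr ⟨hyw, hv⟩))⟩

section Finite

variable [Finite V]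

lemma ncard_attachedComponents_le_three_of_subset (h : IsStrongBarVisibilityRep G y a b)
    (hnadj : ¬ G.Adj u v) (hy : y u < y v) {J₁ J₂ : Set ℝ} [J₁.OrdConnected]
    [J₂.OrdConnected] (hJ₁ : ∀ w ∈ ({u, v} : Set V), y w ∉ J₁)
    (hJ₂ : ∀ w ∈ ({u, v} : Set V), y w ∉ J₂) {x₁ x₂ : ℝ}
    (hsub : G.attachedComponents {u, v} ⊆ (G.isolateVerts {u, v}).connectedComponentMk ''
      (stripVerts y a b u v ∪ columnVerts y a b J₁ x₁ ∪ columnVerts y a b J₂ x₂)) :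
    (G.attachedComponents {u, v}).ncard ≤ 3 := by
  rw [image_union, image_union] at hsub
  exact ncard_le_three_of_subset_union hsub (h.subsingleton_image_stripVerts hnadj hy)
    (h.subsingleton_image_columnVerts fun w hw hwJ => absurd hwJ (hJ₁ w hw))
    (h.subsingleton_image_columnVerts fun w hw hwJ => absurd hwJ (hJ₂ w hw))

lemma ncard_attachedComponents_le_three_of_lt (h : IsStrongBarVisibilityRep G y a b)
    (hnadj : ¬ G.Adj u v) (hy : y u < y v) (hvu : a v ≤ b u) (huv : a u ≤ b v) :
    (G.attachedComponents {u, v}).ncard ≤ 3 := by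
  have hJ : ∀ w ∈ ({u, v} : Set V), y w ∉ Ioi (y v) := by simp [hy.le]
  rcases le_total (a u) (a v) with ha | ha <;> rcases le_total (b u) (b v) with hb | hb
  · exact h.ncard_attachedComponents_le_three_of_subset hnadj hy hJ (by simp [hy.le])
      (h.attachedComponents_subset_of_crossing hy ha hvu hb)
  · exact h.ncard_attachedComponents_le_three_of_subset hnadj hy hJ hJ
      (h.attachedComponents_subset_of_nested hy ha hb)
  · rw [pair_comm]
    have hy' : -y v < -y u := neg_lt_neg hy
    exact h.neg_y.ncard_attachedComponents_le_three_of_subset (fun e => hnadj e.symm) hy'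
      (by simp [hy.le]) (by simp [hy.le]) (h.neg_y.attachedComponents_subset_of_nested hy' ha hb)
  · exact h.neg_x.ncard_attachedComponents_le_three_of_subset hnadj hy hJ (by simp [hy.le])
      (h.neg_x.attachedComponents_subset_of_crossing hy (neg_le_neg hb) (neg_le_neg huv)
        (neg_le_neg ha))

theorem ncard_attachedComponents_le_three (h : IsStrongBarVisibilityRep G y a b) (hne : u ≠ v)
    (hnadj : ¬ G.Adj u v) : (G.attachedComponents {u, v}).ncard ≤ 3 := by
  rcases lt_or_ge (b u) (a v) with huv | hvu
  · exact (ncard_le_one_iff_subsingleton.mpr (h.attachedComponents_subsingleton_of_lt huv)).trans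
      (by norm_num)
  rcases lt_or_ge (b v) (a u) with hvu' | huv
  · rw [pair_comm]
    exact (ncard_le_one_iff_subsingleton.mpr (h.attachedComponents_subsingleton_of_lt hvu')).trans
      (by norm_num)
  have hx : max (a u) (a v) ∈ Icc (a u) (b u) ∩ Icc (a v) (b v) :=
    ⟨⟨le_max_left _ _, max_le (h.1 u) hvu⟩, ⟨le_max_right _ _, max_le huv (h.1 v)⟩⟩
  rcases (h.y_ne hne hx.1 hx.2).lt_or_gt with hy | hy
  · exact h.ncard_attachedComponents_le_three_of_lt hnadj hy hvu huv
  · rw [pair_comm]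
    exact h.ncard_attachedComponents_le_three_of_lt (fun e => hnadj e.symm) hy huv hvu

end Finite

end IsStrongBarVisibilityRep

theorem strong_bar_visibility_no_bad_pair_general {V : Type*} [Fintype V]
    (G : SimpleGraph V) (h2 : TwoConnected G)
    (y a b : V → ℝ) (hrep : IsStrongBarVisibilityRep G y a b) :
    ¬ ∃ u v : V, u ≠ v ∧ ¬ G.Adj u v ∧
      4 ≤ Nat.card (((⊤ : G.Subgraph).deleteVerts {u, v}).coe.ConnectedComponent) := by
  rintro ⟨u, v, hne, hnadj, hcard⟩
  have hle := G.natCard_le_ncard_attachedComponents hne (h2.2 u) (h2.2 v)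
  have hthree := hrep.ncard_attachedComponents_le_three hne hnadj
  omega

/-- If a `2`-connected planar graph admits a strong bar visibility
representation, then there is no pair of non-adjacent vertices whose removal
separates the graph into four or more connected components. -/
theorem strong_bar_visibility_no_bad_pair {V : Type*} [Fintype V]
    (G : SimpleGraph V) (h2 : TwoConnected G) (hplanar : IsPlanar G)
    (y a b : V → ℝ) (hrep : IsStrongBarVisibilityRep G y a b) :
    ¬ ∃ u v : V, u ≠ v ∧ ¬ G.Adj u v ∧
      4 ≤ Nat.card (((⊤ : G.Subgraph).deleteVerts {u, v}).coe.ConnectedComponent) :=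
  strong_bar_visibility_no_bad_pair_general G h2 y a b hrep
end

section
/- Every graph with diameter at most 2 has edge-connectivity equal to its minimum degree (Plesník's theorem). -/
/-!
Let `S` be a set of edges whose deletion disconnects `G`, and `A` the component of a vertex `a`
in `G - S`, so that `S` contains every edge between `A` and its complement. If every vertex of `A`
has a neighbour outside `A`, then sending a neighbour `x` of `a` to the edge `x x'`, for a chosen
neighbour `x' ∉ A` of `x`, when `x ∈ A`, and to the edge `a x` otherwise, injects the neighbourhood
of `a` into `S`; hence `δ(G) ≤ deg a ≤ |S|`. Otherwise some `x ∈ A` has all its neighbours in `A`.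
Every vertex outside `A` is at distance at most `2` from `x`, so it has a neighbour in `A`, and the
same argument applies to the complement of `A`. Deleting the edges at a vertex of minimum degree
shows that the bound is attained.
-/

open Finset

namespace SimpleGraph

variable {V : Type*}

def Separates (G : SimpleGraph V) (S : Set (Sym2 V)) (A : Set V) : Prop :=
  ∀ ⦃x y⦄, x ∈ A → y ∉ A → G.Adj x y → s(x, y) ∈ S

variable {G : SimpleGraph V} {S : Set (Sym2 V)} {A : Set V}

lemma Separates.compl (h : G.Separates S A) : G.Separates S Aᶜ :=
  fun _ _ hx hy hxy => Sym2.eq_swap ▸ h (not_not.mp hy) hx hxy.symm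

lemma separates_setOf_reachable (S : Set (Sym2 V)) (a : V) :
    G.Separates S {x | (G.deleteEdges S).Reachable a x} :=
  fun _ _ hx hy hxy => by_contra fun hS =>
    hy (hx.trans (Adj.reachable ((deleteEdges_adj ..).mpr ⟨hxy, hS⟩)))

lemma Separates.degree_le_card {S : Finset (Sym2 V)} (h : G.Separates S A)
    (hA : ∀ x ∈ A, ∃ y ∉ A, G.Adj x y) {a : V} (ha : a ∈ A) [Fintype (G.neighborSet a)] :
    G.degree a ≤ #S := by
  classical
  choose! g hgA hg using hA
  rw [← card_neighborFinset_eq_degree]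
  refine card_le_card_of_injOn (fun x => if x ∈ A then s(x, g x) else s(a, x)) ?_ ?_
  · intro x hx
    simp only [coe_neighborFinset, mem_neighborSet] at hx
    dsimp only
    split_ifs with hxA
    exacts [h hxA (hgA x hxA) (hg x hxA), h ha hxA hx]
  · intro x hx y hy hxy
    simp only [coe_neighborFinset, mem_neighborSet] at hx hy
    dsimp only at hxy
    split_ifs at hxy <;> grind [Sym2.eq_iff, SimpleGraph.irrefl]

lemma forall_exists_adj_compl_or_of_diam_le_two
    (hdiam : ∀ u v : V, u ≠ v → G.Adj u v ∨ ∃ w : V, G.Adj u w ∧ G.Adj w v) (A : Set V) :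
    (∀ x ∈ A, ∃ y ∉ A, G.Adj x y) ∨ ∀ y ∈ Aᶜ, ∃ z ∉ Aᶜ, G.Adj y z := by
  refine or_iff_not_imp_left.mpr fun hA y hy => ?_
  push Not at hA
  obtain ⟨x, hx, hxA⟩ := hA
  rcases hdiam x y (fun hxy => hy (hxy ▸ hx)) with hxy | ⟨w, hxw, hwy⟩
  · exact absurd hxy (hxA y hy)
  · exact ⟨w, fun hw => hxA w hw hxw, hwy.symm⟩

variable (G) in
lemma not_connected_deleteEdges_incidenceSet [Nontrivial V] (v : V) :
    ¬ (G.deleteEdges (G.incidenceSet v)).Connected := fun h =>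
  h.preconnected.not_isIsolated v fun _ hw => by
    rw [deleteEdges_adj] at hw
    exact hw.2 ⟨hw.1, Sym2.mem_mk_left _ _⟩

variable [Fintype V] [DecidableRel G.Adj]

lemma minDegree_le_card_of_separates
    (hdiam : ∀ u v : V, u ≠ v → G.Adj u v ∨ ∃ w : V, G.Adj u w ∧ G.Adj w v)
    {S : Finset (Sym2 V)} (h : G.Separates S A) {a b : V} (ha : a ∈ A) (hb : b ∉ A) :
    G.minDegree ≤ #S := by
  rcases forall_exists_adj_compl_or_of_diam_le_two hdiam A with hA | hA
  · exact (G.minDegree_le_degree a).trans (h.degree_le_card hA ha)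
  · exact (G.minDegree_le_degree b).trans (h.compl.degree_le_card hA hb)

lemma minDegree_le_card_of_not_connected_deleteEdges [Nonempty V]
    (hdiam : ∀ u v : V, u ≠ v → G.Adj u v ∨ ∃ w : V, G.Adj u w ∧ G.Adj w v)
    {S : Finset (Sym2 V)} (hS : ¬ (G.deleteEdges S).Connected) : G.minDegree ≤ #S := by
  obtain ⟨a, b, hab⟩ : ∃ a b, ¬ (G.deleteEdges S).Reachable a b := by
    simpa [connected_iff, Preconnected] using hS
  exact minDegree_le_card_of_separates hdiam (separates_setOf_reachable _ a) (Reachable.refl a) hab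

end SimpleGraph

/-- Plesník's theorem: a finite graph (with at least two vertices) of diameter
at most `2` — any two distinct vertices are adjacent or have a common
neighbour — has edge-connectivity equal to its minimum degree: the least
cardinality of a set of edges whose removal disconnects the graph equals the
minimum degree. -/
theorem edgeConnectivity_eq_minDegree_of_diam_le_two {V : Type*} [Fintype V]
    (G : SimpleGraph V) [DecidableRel G.Adj] (hV : 2 ≤ Fintype.card V)
    (hdiam : ∀ u v : V, u ≠ v → G.Adj u v ∨ ∃ w : V, G.Adj u w ∧ G.Adj w v) :
    sInf {c : ℕ | ∃ S : Finset (Sym2 V), ↑S ⊆ G.edgeSet ∧ S.card = c ∧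
        ¬ (G.deleteEdges ↑S).Connected} = G.minDegree := by
  classical
  have : Nontrivial V := Fintype.one_lt_card_iff_nontrivial.mp hV
  obtain ⟨v, hv⟩ := G.exists_minimal_degree_vertex
  refine IsLeast.csInf_eq ⟨⟨G.incidenceFinset v, ?_, ?_, ?_⟩, ?_⟩
  · simpa only [G.coe_incidenceFinset] using G.incidenceSet_subset v
  · rw [G.card_incidenceFinset_eq_degree, hv]
  · simpa only [G.coe_incidenceFinset] using G.not_connected_deleteEdges_incidenceSet v
  · rintro _ ⟨S, -, rfl, hS⟩
    exact SimpleGraph.minDegree_le_card_of_not_connected_deleteEdges hdiam hS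
end
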